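/- arXiv:2503.15033 — 6 statements merged into one kernel-verified Lean document; each statement's English description precedes it below -/
import Mathlib

section
/- Let α0 < α1 be real numbers with α0, α1 ∈ ℝ. For j = 0,1 let ξ_j, L1_j, L2_j : (0,∞) → ℝ be differentiable solutions of the reduced U(2)-invariant expander system satisfying the boundary conditions at 0 with parameter α_j. Then for all t ∈ (0,∞): ξ_1(t) > ξ_0(t), 0 < L1_1(t) < L1_0(t), and 0 < L2_1(t) < L2_0(t). -/
open Set Filter

/-- The reduced U(2)-invariant expander system on `(0,∞)`:
`ξ' = 1 − L1² − 2·L2²`, `L1' = 1 − ξ·L1`, `L2' = 1 − ξ·L2`. -/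
def ReducedSystem (ξ L1 L2 : ℝ → ℝ) : Prop :=
  ∀ t ∈ Ioi (0 : ℝ),
    HasDerivAt ξ (1 - (L1 t) ^ 2 - 2 * (L2 t) ^ 2) t ∧
    HasDerivAt L1 (1 - ξ t * L1 t) t ∧
    HasDerivAt L2 (1 - ξ t * L2 t) t

/-- Boundary conditions at `0` with parameter `α` for the reduced U(2)-invariant
expander system: `ξ − 1/t` and `L1 − 1/t` extend to `C¹` functions on `[0,∞)`
vanishing at `0` with derivative `2α/3 + 1` and `−α/3` respectively, and `L2`
extends to a `C¹` function on `[0,∞)` with `L2(0) = 0`, `L2'(0) = 1/2`. -/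
def ReducedBC (α : ℝ) (ξ L1 L2 : ℝ → ℝ) : Prop :=
  (∃ g : ℝ → ℝ, ContDiffOn ℝ 1 g (Ici 0) ∧ (∀ t ∈ Ioi (0 : ℝ), g t = ξ t - 1 / t) ∧
      g 0 = 0 ∧ derivWithin g (Ici 0) 0 = 2 * α / 3 + 1) ∧
  (∃ g : ℝ → ℝ, ContDiffOn ℝ 1 g (Ici 0) ∧ (∀ t ∈ Ioi (0 : ℝ), g t = L1 t - 1 / t) ∧
      g 0 = 0 ∧ derivWithin g (Ici 0) 0 = -α / 3) ∧
  (∃ g : ℝ → ℝ, ContDiffOn ℝ 1 g (Ici 0) ∧ (∀ t ∈ Ioi (0 : ℝ), g t = L2 t) ∧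
      g 0 = 0 ∧ derivWithin g (Ici 0) 0 = 1 / 2)

/-! A comparison argument. Write `D = ξ₁ - ξ₀`, `M1 = L1₀ - L1₁`, `M2 = L2₀ - L2₁`. The system gives
`D' = L1₀² - L1₁² + 2 (L2₀² - L2₁²)`, `Mi' = D · Li₁ - ξ₀ · Mi` and `Li₁' = 1 - ξ₁ · Li₁`.
Near `0` the boundary conditions make `D`, `M1` (with slopes `2(α₁ - α₀)/3`, `(α₁ - α₀)/3`), `L1₁`
and `L2₁` positive, and `ξ₀ ~ 1/t ≥ 0`; since `M2' > 0` wherever `M2 ≤ 0` there, a minimum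
argument makes `M2` positive too. If all five quantities are positive on `(0, τ)`, then `D` is
nondecreasing there, and each other quantity has positive derivative at `τ` if it vanishes at `τ`,
so all five are still positive at `τ`, hence near `τ`. -/

open Topology

lemma HasDerivWithinAt.eventually_lt_of_Iio {f : ℝ → ℝ} {f' x : ℝ}
    (hf : HasDerivWithinAt f f' (Iio x) x) (hf' : 0 < f') : ∀ᶠ y in 𝓝[<] x, f y < f x := by
  filter_upwards [((hasDerivWithinAt_iff_tendsto_slope' (s := Iio x) (lt_irrefl x)).1 hf).eventually
    (lt_mem_nhds hf'), self_mem_nhdsWithin] with y hy (hyx : y < x)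
  rw [slope_def_field] at hy
  rcases div_pos_iff.1 hy with h | h <;> linarith [h.1, h.2]

theorem forall_pos_of_continuity_method {p : ℝ → Prop} (hstart : ∀ᶠ t in 𝓝[>] 0, p t)
    (hclosed : ∀ τ > 0, (∀ s ∈ Ioo 0 τ, p s) → p τ)
    (hopen : ∀ τ > 0, p τ → ∀ᶠ s in 𝓝 τ, p s) : ∀ t > 0, p t := by
  by_contra! ⟨t, ht, hpt⟩
  set S := {s : ℝ | 0 < s ∧ ¬ p s}
  have hSne : S.Nonempty := ⟨t, ht, hpt⟩
  obtain ⟨δ, hδ, hδp⟩ := mem_nhdsGT_iff_exists_Ioo_subset.1 hstart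
  have hSδ : ∀ s ∈ S, δ ≤ s := fun s hs => not_lt.1 fun h => hs.2 (hδp ⟨hs.1, h⟩)
  have hτ : 0 < sInf S := lt_of_lt_of_le hδ (le_csInf hSne hSδ)
  have hbelow : ∀ s ∈ Ioo 0 (sInf S), p s := fun s hs =>
    by_contra fun h => (csInf_le ⟨δ, hSδ⟩ ⟨hs.1, h⟩).not_gt hs.2
  obtain ⟨ε, hε, hball⟩ := Metric.eventually_nhds_iff.1 (hopen _ hτ (hclosed _ hτ hbelow))
  obtain ⟨s, hsS, hs⟩ := exists_lt_of_csInf_lt hSne (lt_add_of_pos_right _ hε)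
  have hτs : sInf S ≤ s := csInf_le ⟨δ, hSδ⟩ hsS
  exact hsS.2 (hball (by rw [Real.dist_eq, abs_lt]; constructor <;> linarith))

lemma pos_of_pos_on_Ioo_of_hasDerivAt {u : ℝ → ℝ} {u' a τ : ℝ} (haτ : a < τ)
    (hu : HasDerivAt u u' τ) (hpos : ∀ s ∈ Ioo a τ, 0 < u s) (hu' : u τ = 0 → 0 < u') :
    0 < u τ := by
  have hnonneg : 0 ≤ u τ := ge_of_tendsto (hu.continuousAt.tendsto.mono_left nhdsWithin_le_nhds)
    (eventually_of_mem (Ioo_mem_nhdsLT haτ) fun s hs => (hpos s hs).le)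
  refine hnonneg.lt_of_ne fun h => ?_
  obtain ⟨s, hs, hsτ⟩ := ((eventually_mem_set.2 (Ioo_mem_nhdsLT haτ)).and
    (hu.hasDerivWithinAt.eventually_lt_of_Iio (hu' h.symm))).exists
  linarith [hpos s hs]

lemma pos_of_pos_on_Ioo_of_deriv_nonneg {u u' : ℝ → ℝ} {a τ : ℝ} (haτ : a < τ)
    (hu : ∀ s ∈ Ioc a τ, HasDerivAt u (u' s) s) (hu' : ∀ s ∈ Ioo a τ, 0 ≤ u' s)
    (hpos : ∀ s ∈ Ioo a τ, 0 < u s) : 0 < u τ := by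
  obtain ⟨m, ham, hmτ⟩ := exists_between haτ
  have hsub : Icc m τ ⊆ Ioc a τ := Icc_subset_Ioc ham le_rfl
  have hmono : MonotoneOn u (Icc m τ) := by
    refine monotoneOn_of_hasDerivWithinAt_nonneg (f' := u') (convex_Icc m τ)
      (fun s hs => (hu s (hsub hs)).continuousAt.continuousWithinAt)
      (fun s hs => (hu s (hsub (interior_subset hs))).hasDerivWithinAt) fun s hs => ?_
    rw [interior_Icc] at hs
    exact hu' s ⟨ham.trans hs.1, hs.2⟩
  exact (hpos m ⟨ham, hmτ⟩).trans_le
    (hmono (left_mem_Icc.2 hmτ.le) (right_mem_Icc.2 hmτ.le) hmτ.le)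

/-- If `u t ≤ 0`, then `u < 0` somewhere to the left of `t`; a minimum of `u` on a compact interval
ending there, with `u` larger at its left end, would be a point where `u ≤ 0` and yet `u` decreases
to its left. -/
lemma pos_of_tendsto_zero_of_deriv_pos_of_nonpos {u u' : ℝ → ℝ} {a b : ℝ}
    (hu : ∀ t ∈ Ioo a b, HasDerivAt u (u' t) t) (hu' : ∀ t ∈ Ioo a b, u t ≤ 0 → 0 < u' t)
    (hu0 : Tendsto u (𝓝[>] a) (𝓝 0)) : ∀ t ∈ Ioo a b, 0 < u t := by
  intro t ht
  by_contra! hut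
  obtain ⟨s, hs, hst⟩ := ((eventually_mem_set.2 (Ioo_mem_nhdsLT ht.1)).and
    ((hu t ht).hasDerivWithinAt.eventually_lt_of_Iio (hu' t ht hut))).exists
  obtain ⟨ε, hε, hsε⟩ := ((eventually_mem_set.2 (Ioo_mem_nhdsGT hs.1)).and
    (hu0.eventually (lt_mem_nhds (hst.trans_le hut)))).exists
  have hsub : Icc ε s ⊆ Ioo a b := fun r hr => ⟨hε.1.trans_le hr.1, hr.2.trans_lt (hs.2.trans ht.2)⟩
  obtain ⟨c, hc, hmin⟩ := isCompact_Icc.exists_isMinOn (nonempty_Icc.2 hε.2.le)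
    fun r hr => (hu r (hsub hr)).continuousAt.continuousWithinAt
  have hcs : u c ≤ u s := hmin (right_mem_Icc.2 hε.2.le)
  have hεc : ε < c := hc.1.lt_of_ne (by rintro rfl; linarith)
  obtain ⟨r, hr, hrc⟩ := ((eventually_mem_set.2 (Ioo_mem_nhdsLT hεc)).and
    ((hu c (hsub hc)).hasDerivWithinAt.eventually_lt_of_Iio (hu' c (hsub hc) (by linarith)))).exists
  exact (hmin ⟨hr.1.le, hr.2.le.trans hc.2⟩ : u c ≤ u r).not_gt hrc

lemma tendsto_div_nhdsGT_zero_of_extension {f : ℝ → ℝ} {d : ℝ}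
    (h : ∃ g : ℝ → ℝ, ContDiffOn ℝ 1 g (Ici 0) ∧ (∀ t ∈ Ioi (0 : ℝ), g t = f t) ∧
      g 0 = 0 ∧ derivWithin g (Ici 0) 0 = d) :
    Tendsto (fun t => f t / t) (𝓝[>] 0) (𝓝 d) := by
  obtain ⟨g, hg, hgf, hg0, rfl⟩ := h
  have hderiv := ((hg.differentiableOn one_ne_zero) 0 self_mem_Ici).hasDerivWithinAt.Ioi_of_Ici
  refine ((hasDerivWithinAt_iff_tendsto_slope' (lt_irrefl 0)).1 hderiv).congr'
    (eventually_of_mem self_mem_nhdsWithin fun t ht => ?_)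
  simp [slope_def_field, hg0, hgf t ht]

lemma eventually_pos_of_tendsto_div {f : ℝ → ℝ} {d : ℝ}
    (hf : Tendsto (fun t => f t / t) (𝓝[>] 0) (𝓝 d)) (hd : 0 < d) :
    ∀ᶠ t in 𝓝[>] 0, 0 < f t := by
  filter_upwards [hf.eventually (lt_mem_nhds hd), self_mem_nhdsWithin] with t h (ht : 0 < t)
  exact (div_pos_iff_of_pos_right ht).1 h

lemma tendsto_zero_of_tendsto_div {f : ℝ → ℝ} {d : ℝ}
    (hf : Tendsto (fun t => f t / t) (𝓝[>] 0) (𝓝 d)) : Tendsto f (𝓝[>] 0) (𝓝 0) := by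
  have h := hf.mul (tendsto_nhdsWithin_of_tendsto_nhds tendsto_id)
  rw [mul_zero] at h
  exact h.congr' (eventually_of_mem self_mem_nhdsWithin fun t ht => div_mul_cancel₀ _ (ne_of_gt ht))

lemma tendsto_atTop_of_tendsto_sub_inv {f : ℝ → ℝ} {c : ℝ}
    (hf : Tendsto (fun t => f t - 1 / t) (𝓝[>] 0) (𝓝 c)) : Tendsto f (𝓝[>] 0) atTop := by
  simpa using hf.add_atTop tendsto_inv_nhdsGT_zero

lemma hasDerivAt_sub_of_linear {ξ₀ ξ₁ L₀ L₁ : ℝ → ℝ} {t : ℝ}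
    (h₀ : HasDerivAt L₀ (1 - ξ₀ t * L₀ t) t) (h₁ : HasDerivAt L₁ (1 - ξ₁ t * L₁ t) t) :
    HasDerivAt (fun s => L₀ s - L₁ s) ((ξ₁ t - ξ₀ t) * L₁ t - ξ₀ t * (L₀ t - L₁ t)) t :=
  (h₀.sub h₁).congr_deriv (by ring)

def ReducedOrdered (ξ₀ L1₀ L2₀ ξ₁ L1₁ L2₁ : ℝ → ℝ) (t : ℝ) : Prop :=
  ξ₀ t < ξ₁ t ∧ (0 < L1₁ t ∧ L1₁ t < L1₀ t) ∧ (0 < L2₁ t ∧ L2₁ t < L2₀ t)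

section

variable {ξ₀ L1₀ L2₀ ξ₁ L1₁ L2₁ : ℝ → ℝ}

lemma eventually_reducedOrdered_nhdsGT_zero {α₀ α₁ : ℝ} (hα : α₀ < α₁)
    (hsys₀ : ReducedSystem ξ₀ L1₀ L2₀) (hbc₀ : ReducedBC α₀ ξ₀ L1₀ L2₀)
    (hsys₁ : ReducedSystem ξ₁ L1₁ L2₁) (hbc₁ : ReducedBC α₁ ξ₁ L1₁ L2₁) :
    ∀ᶠ t in 𝓝[>] 0, ReducedOrdered ξ₀ L1₀ L2₀ ξ₁ L1₁ L2₁ t := by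
  have hξ₀ := tendsto_div_nhdsGT_zero_of_extension hbc₀.1
  have hL1₀ := tendsto_div_nhdsGT_zero_of_extension hbc₀.2.1
  have hL2₀ := tendsto_div_nhdsGT_zero_of_extension hbc₀.2.2
  have hξ₁ := tendsto_div_nhdsGT_zero_of_extension hbc₁.1
  have hL1₁ := tendsto_div_nhdsGT_zero_of_extension hbc₁.2.1
  have hL2₁ := tendsto_div_nhdsGT_zero_of_extension hbc₁.2.2
  have hD : ∀ᶠ t in 𝓝[>] 0, 0 < ξ₁ t - ξ₀ t :=
    eventually_pos_of_tendsto_div ((hξ₁.sub hξ₀).congr fun t => by ring) (by linarith)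
  have hM1 : ∀ᶠ t in 𝓝[>] 0, 0 < L1₀ t - L1₁ t :=
    eventually_pos_of_tendsto_div ((hL1₀.sub hL1₁).congr fun t => by ring) (by linarith)
  have hL1 : ∀ᶠ t in 𝓝[>] 0, 0 < L1₁ t :=
    (tendsto_atTop_of_tendsto_sub_inv (tendsto_zero_of_tendsto_div hL1₁)).eventually_gt_atTop 0
  have hL2 : ∀ᶠ t in 𝓝[>] 0, 0 < L2₁ t := eventually_pos_of_tendsto_div hL2₁ one_half_pos
  have hξ₀_nonneg : ∀ᶠ t in 𝓝[>] 0, 0 ≤ ξ₀ t :=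
    (tendsto_atTop_of_tendsto_sub_inv (tendsto_zero_of_tendsto_div hξ₀)).eventually_ge_atTop 0
  have hM2_lim : Tendsto (fun t => L2₀ t - L2₁ t) (𝓝[>] 0) (𝓝 0) := by
    simpa using (tendsto_zero_of_tendsto_div hL2₀).sub (tendsto_zero_of_tendsto_div hL2₁)
  obtain ⟨δ, hδ, hnear⟩ :=
    mem_nhdsGT_iff_exists_Ioo_subset.1 (hD.and (hM1.and (hL1.and (hL2.and hξ₀_nonneg))))
  have hM2 : ∀ t ∈ Ioo 0 δ, 0 < L2₀ t - L2₁ t := by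
    refine pos_of_tendsto_zero_of_deriv_pos_of_nonpos
      (fun t ht => hasDerivAt_sub_of_linear (hsys₀ t ht.1).2.2 (hsys₁ t ht.1).2.2) ?_ hM2_lim
    intro t ht hM2t
    obtain ⟨hDt, -, -, hL2t, hξ₀t⟩ := hnear ht
    nlinarith [mul_pos hDt hL2t, mul_nonneg hξ₀t (neg_nonneg.2 hM2t)]
  filter_upwards [Ioo_mem_nhdsGT hδ] with t ht
  obtain ⟨hDt, hM1t, hL1t, hL2t, -⟩ := hnear ht
  exact ⟨by linarith, ⟨hL1t, by linarith⟩, hL2t, by linarith [hM2 t ht]⟩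

lemma reducedOrdered_of_forall_Ioo (hsys₀ : ReducedSystem ξ₀ L1₀ L2₀)
    (hsys₁ : ReducedSystem ξ₁ L1₁ L2₁) {τ : ℝ} (hτ : 0 < τ)
    (h : ∀ s ∈ Ioo 0 τ, ReducedOrdered ξ₀ L1₀ L2₀ ξ₁ L1₁ L2₁ s) :
    ReducedOrdered ξ₀ L1₀ L2₀ ξ₁ L1₁ L2₁ τ := by
  obtain ⟨-, hL1₀, hL2₀⟩ := hsys₀ τ hτ
  obtain ⟨-, hL1₁, hL2₁⟩ := hsys₁ τ hτ
  have hL1 : 0 < L1₁ τ :=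
    pos_of_pos_on_Ioo_of_hasDerivAt hτ hL1₁ (fun s hs => (h s hs).2.1.1) fun h0 => by simp [h0]
  have hL2 : 0 < L2₁ τ :=
    pos_of_pos_on_Ioo_of_hasDerivAt hτ hL2₁ (fun s hs => (h s hs).2.2.1) fun h0 => by simp [h0]
  have hD : 0 < ξ₁ τ - ξ₀ τ := by
    refine pos_of_pos_on_Ioo_of_deriv_nonneg (u := fun s => ξ₁ s - ξ₀ s) hτ
      (fun s hs => (hsys₁ s hs.1).1.sub (hsys₀ s hs.1).1) (fun s hs => ?_)
      fun s hs => sub_pos.2 (h s hs).1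
    obtain ⟨-, ⟨h1, h1'⟩, h2, h2'⟩ := h s hs
    nlinarith [mul_pos (sub_pos.2 h1') (add_pos (h1.trans h1') h1),
      mul_pos (sub_pos.2 h2') (add_pos (h2.trans h2') h2)]
  have hM1 : 0 < L1₀ τ - L1₁ τ :=
    pos_of_pos_on_Ioo_of_hasDerivAt (u := fun s => L1₀ s - L1₁ s) hτ
      (hasDerivAt_sub_of_linear hL1₀ hL1₁)
      (fun s hs => sub_pos.2 (h s hs).2.1.2) fun h0 => by simpa [h0] using mul_pos hD hL1
  have hM2 : 0 < L2₀ τ - L2₁ τ :=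
    pos_of_pos_on_Ioo_of_hasDerivAt (u := fun s => L2₀ s - L2₁ s) hτ
      (hasDerivAt_sub_of_linear hL2₀ hL2₁)
      (fun s hs => sub_pos.2 (h s hs).2.2.2) fun h0 => by simpa [h0] using mul_pos hD hL2
  exact ⟨sub_pos.1 hD, ⟨hL1, sub_pos.1 hM1⟩, hL2, sub_pos.1 hM2⟩

lemma eventually_reducedOrdered_nhds (hsys₀ : ReducedSystem ξ₀ L1₀ L2₀)
    (hsys₁ : ReducedSystem ξ₁ L1₁ L2₁) {τ : ℝ} (hτ : 0 < τ)
    (h : ReducedOrdered ξ₀ L1₀ L2₀ ξ₁ L1₁ L2₁ τ) :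
    ∀ᶠ s in 𝓝 τ, ReducedOrdered ξ₀ L1₀ L2₀ ξ₁ L1₁ L2₁ s := by
  obtain ⟨hξ₀, hL1₀, hL2₀⟩ := hsys₀ τ hτ
  obtain ⟨hξ₁, hL1₁, hL2₁⟩ := hsys₁ τ hτ
  obtain ⟨hξ, ⟨hL1, hM1⟩, hL2, hM2⟩ := h
  filter_upwards [hξ₀.continuousAt.eventually_lt hξ₁.continuousAt hξ,
    continuousAt_const.eventually_lt hL1₁.continuousAt hL1,
    hL1₁.continuousAt.eventually_lt hL1₀.continuousAt hM1,
    continuousAt_const.eventually_lt hL2₁.continuousAt hL2,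
    hL2₁.continuousAt.eventually_lt hL2₀.continuousAt hM2] with s h1 h2 h3 h4 h5
  exact ⟨h1, ⟨h2, h3⟩, h4, h5⟩

end

/-- Monotonicity in the parameter `α` for the reduced U(2)-invariant expander system. -/
theorem reduced_system_monotone_in_alpha (α₀ α₁ : ℝ) (hα : α₀ < α₁)
    (ξ₀ L1₀ L2₀ ξ₁ L1₁ L2₁ : ℝ → ℝ)
    (hsys₀ : ReducedSystem ξ₀ L1₀ L2₀) (hbc₀ : ReducedBC α₀ ξ₀ L1₀ L2₀)
    (hsys₁ : ReducedSystem ξ₁ L1₁ L2₁) (hbc₁ : ReducedBC α₁ ξ₁ L1₁ L2₁) :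
    ∀ t ∈ Ioi (0 : ℝ),
      ξ₁ t > ξ₀ t ∧ (0 < L1₁ t ∧ L1₁ t < L1₀ t) ∧ (0 < L2₁ t ∧ L2₁ t < L2₀ t) :=
  forall_pos_of_continuity_method (eventually_reducedOrdered_nhdsGT_zero hα hsys₀ hbc₀ hsys₁ hbc₁)
    (fun _ hτ => reducedOrdered_of_forall_Ioo hsys₀ hsys₁ hτ)
    (fun _ hτ => eventually_reducedOrdered_nhds hsys₀ hsys₁ hτ)
end

section
/- The explicit functions ξ(t) = √3·(e^{2√3 t} + 1)/(e^{2√3 t} − 1), L1(t) = (1/√3)·(e^{2√3 t} + 4e^{√3 t} + 1)/(e^{2√3 t} − 1), and L2(t) = (1/√3)·(e^{√3 t} − 1)/(e^{√3 t} + 1), defined for t ∈ (0,∞), solve the reduced U(2)-invariant expander system and satisfy the boundary conditions at 0 with parameter α = 0; moreover ξ(t) → √3, L1(t) → 1/√3 and L2(t) → 1/√3 as t → ∞. -/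
open Set Filter

/-- The explicit Einstein (`α = 0`) solution of the reduced U(2)-invariant
expander system. -/
noncomputable def ξE : ℝ → ℝ := fun t =>
  Real.sqrt 3 * (Real.exp (2 * Real.sqrt 3 * t) + 1) / (Real.exp (2 * Real.sqrt 3 * t) - 1)

noncomputable def L1E : ℝ → ℝ := fun t =>
  (1 / Real.sqrt 3) *
    (Real.exp (2 * Real.sqrt 3 * t) + 4 * Real.exp (Real.sqrt 3 * t) + 1) /
      (Real.exp (2 * Real.sqrt 3 * t) - 1)

noncomputable def L2E : ℝ → ℝ := fun t =>
  (1 / Real.sqrt 3) * (Real.exp (Real.sqrt 3 * t) - 1) / (Real.exp (Real.sqrt 3 * t) + 1)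


open Real Topology

/-!
With `y = √3 t` the three functions are `ξ = √3 coth y`, `L1 = (cosh y + 2) / (√3 sinh y)` and
`L2 = tanh (y / 2) / √3`, so the system reduces to `cosh² y - sinh² y = 1`. Near `t = 0` the
system expresses the derivatives of the regular parts `ξ - 1/t` and `L1 - 1/t` through the
difference quotients `(ξ - 1/t)/t` and `(L1 - 1/t)/t`; hence the `C¹` boundary conditions follow
from the Laurent expansions `coth y = 1/y + y/3 + O(y³)` and `(cosh y + 2)/sinh y = 3/y + O(y³)`,
which L'Hôpital's rule provides. At infinity the functions are continuous in `e^{-√3 t} → 0`.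
-/

theorem tendsto_div_pow_succ_of_hasDerivAt {f f' : ℝ → ℝ} {n : ℕ} {c : ℝ}
    (hf : ∀ x, HasDerivAt f (f' x) x) (h0 : f 0 = 0)
    (h : Tendsto (fun x => f' x / x ^ n) (𝓝[>] 0) (𝓝 c)) :
    Tendsto (fun x => f x / x ^ (n + 1)) (𝓝[>] 0) (𝓝 (c / (n + 1))) := by
  refine HasDerivAt.lhopital_zero_nhdsGT (f' := f') (g' := fun x => (n + 1 : ℝ) * x ^ n)
    (.of_forall hf) (.of_forall fun x => ?_) ?_ ?_ ?_ ?_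
  · simpa using hasDerivAt_pow (n + 1) x
  · filter_upwards [self_mem_nhdsWithin] with x (hx : 0 < x)
    positivity
  · simpa [h0] using (hf 0).continuousAt.tendsto.mono_left nhdsWithin_le_nhds
  · simpa using ((continuous_pow (n + 1)).tendsto (0 : ℝ)).mono_left nhdsWithin_le_nhds
  · simpa only [div_div, mul_comm] using h.div_const (n + 1 : ℝ)

theorem tendsto_nhdsGT_zero_of_tendsto_div_self {f : ℝ → ℝ} {c : ℝ}
    (h : Tendsto (fun t => f t / t) (𝓝[>] 0) (𝓝 c)) : Tendsto f (𝓝[>] 0) (𝓝 0) := by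
  have hid : Tendsto (fun t : ℝ => t) (𝓝[>] 0) (𝓝 0) := tendsto_id.mono_left nhdsWithin_le_nhds
  refine (mul_zero c ▸ h.mul hid).congr'
    (eventually_nhdsWithin_of_forall fun t (ht : 0 < t) => ?_)
  field_simp

theorem tendsto_const_mul_nhdsGT_zero {c : ℝ} (hc : 0 < c) :
    Tendsto (fun t => c * t) (𝓝[>] 0) (𝓝[>] 0) :=
  tendsto_nhdsWithin_of_tendsto_nhds_of_eventually_within _
    (((continuous_const_mul c).tendsto' 0 0 (mul_zero c)).mono_left nhdsWithin_le_nhds)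
    (eventually_nhdsWithin_of_forall fun _ ht => mul_pos hc ht)

theorem exists_contDiffOn_Ici_eqOn_Ioi {f f' : ℝ → ℝ} {c a b : ℝ}
    (hf : ∀ x ∈ Ioi c, HasDerivAt f (f' x) x) (hf' : ContinuousOn f' (Ioi c))
    (ha : Tendsto f (𝓝[>] c) (𝓝 a)) (hb : Tendsto f' (𝓝[>] c) (𝓝 b)) :
    ∃ g : ℝ → ℝ, ContDiffOn ℝ 1 g (Ici c) ∧ (∀ x ∈ Ioi c, g x = f x) ∧ g c = a ∧
      derivWithin g (Ici c) c = b := by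
  set g := Function.update f c a
  have hga : g c = a := Function.update_self ..
  have hgf : ∀ x ∈ Ioi c, g x = f x := fun x hx => Function.update_of_ne hx.ne' ..
  have hg : ∀ x ∈ Ioi c, HasDerivAt g (f' x) x := fun x hx =>
    (hf x hx).congr_of_eventuallyEq <| eventually_of_mem (isOpen_Ioi.mem_nhds hx) hgf
  have hgb : HasDerivWithinAt g b (Ici c) c := by
    refine hasDerivWithinAt_Ici_of_tendsto_deriv (s := Ioi c)
      (fun x hx => (hg x hx).differentiableAt.differentiableWithinAt) ?_ self_mem_nhdsWithin ?_
    · rw [ContinuousWithinAt, hga]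
      exact ha.congr' (eventually_nhdsWithin_of_forall fun x hx => (hgf x hx).symm)
    · exact hb.congr' (eventually_nhdsWithin_of_forall fun x hx => (hg x hx).deriv.symm)
  set g' := Function.update f' c b
  have hg'b : g' c = b := Function.update_self ..
  have hgf' : ∀ x ∈ Ioi c, g' x = f' x := fun x hx => Function.update_of_ne hx.ne' ..
  have hderiv : EqOn (derivWithin g (Ici c)) g' (Ici c) := by
    intro x hx
    rcases (mem_Ici.mp hx).eq_or_lt with rfl | hx
    · exact hg'b.symm ▸ hgb.derivWithin (uniqueDiffOn_Ici _ _ self_mem_Ici)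
    · rw [hgf' x hx]
      exact (hg x hx).hasDerivWithinAt.derivWithin (uniqueDiffOn_Ici c x hx.le)
  refine ⟨g, (contDiffOn_one_iff_derivWithin (uniqueDiffOn_Ici c)).2 ⟨?_, ?_⟩, hgf,
    hga, hg'b ▸ hderiv self_mem_Ici⟩
  · intro x hx
    rcases (mem_Ici.mp hx).eq_or_lt with rfl | hx
    · exact hgb.differentiableWithinAt
    · exact (hg x hx).differentiableAt.differentiableWithinAt
  · refine ContinuousOn.congr (fun x hx => ?_) hderiv
    rcases (mem_Ici.mp hx).eq_or_lt with rfl | hx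
    · rw [← continuousWithinAt_Ioi_iff_Ici, ContinuousWithinAt, hg'b]
      exact hb.congr' (eventually_nhdsWithin_of_forall fun y hy => (hgf' y hy).symm)
    · refine ((hf' x hx).continuousAt (isOpen_Ioi.mem_nhds hx)).congr ?_ |>.continuousWithinAt
      exact eventually_of_mem (isOpen_Ioi.mem_nhds hx) fun y hy => (hgf' y hy).symm

theorem ReducedSystem.continuousOn {ξ L1 L2 : ℝ → ℝ} (h : ReducedSystem ξ L1 L2) :
    ContinuousOn ξ (Ioi 0) ∧ ContinuousOn L1 (Ioi 0) ∧ ContinuousOn L2 (Ioi 0) :=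
  ⟨fun t ht => (h t ht).1.continuousAt.continuousWithinAt,
    fun t ht => (h t ht).2.1.continuousAt.continuousWithinAt,
    fun t ht => (h t ht).2.2.continuousAt.continuousWithinAt⟩

theorem tendsto_mul_cosh_sub_sinh_div_pow_three :
    Tendsto (fun y => (y * cosh y - sinh y) / y ^ 3) (𝓝[>] 0) (𝓝 (1 / 3)) := by
  have d0 (y : ℝ) : HasDerivAt (fun y => y * cosh y - sinh y) (y * sinh y) y :=
    (((hasDerivAt_id' y).mul (hasDerivAt_cosh y)).sub (hasDerivAt_sinh y)).congr_deriv (by ring)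
  have d1 (y : ℝ) : HasDerivAt (fun y => y * sinh y) (sinh y + y * cosh y) y :=
    ((hasDerivAt_id' y).mul (hasDerivAt_sinh y)).congr_deriv (by ring)
  have d2 (y : ℝ) : HasDerivAt (fun y => sinh y + y * cosh y) (2 * cosh y + y * sinh y) y :=
    ((hasDerivAt_sinh y).add ((hasDerivAt_id' y).mul (hasDerivAt_cosh y))).congr_deriv (by ring)
  have h3 : Tendsto (fun y => (2 * cosh y + y * sinh y) / y ^ 0) (𝓝[>] 0) (𝓝 2) := by
    simpa using ((by fun_prop : Continuous fun y => 2 * cosh y + y * sinh y).tendsto 0).mono_left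
      nhdsWithin_le_nhds
  have h := tendsto_div_pow_succ_of_hasDerivAt d0 (by simp) <|
    tendsto_div_pow_succ_of_hasDerivAt d1 (by simp) <|
    tendsto_div_pow_succ_of_hasDerivAt d2 (by simp) h3
  norm_num at h
  exact h

theorem tendsto_mul_cosh_add_two_mul_sub_three_mul_sinh_div_pow_five :
    Tendsto (fun y => (y * cosh y + 2 * y - 3 * sinh y) / y ^ 5) (𝓝[>] 0) (𝓝 (1 / 60)) := by
  have d0 (y : ℝ) :
      HasDerivAt (fun y => y * cosh y + 2 * y - 3 * sinh y) (y * sinh y - 2 * cosh y + 2) y :=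
    ((((hasDerivAt_id' y).mul (hasDerivAt_cosh y)).add ((hasDerivAt_id' y).const_mul 2)).sub
      ((hasDerivAt_sinh y).const_mul 3)).congr_deriv (by ring)
  have d1 (y : ℝ) :
      HasDerivAt (fun y => y * sinh y - 2 * cosh y + 2) (y * cosh y - sinh y) y :=
    ((((hasDerivAt_id' y).mul (hasDerivAt_sinh y)).sub
      ((hasDerivAt_cosh y).const_mul 2)).add_const 2).congr_deriv (by ring)
  have h := tendsto_div_pow_succ_of_hasDerivAt d0 (by simp) <|
    tendsto_div_pow_succ_of_hasDerivAt d1 (by simp) tendsto_mul_cosh_sub_sinh_div_pow_three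
  norm_num at h
  exact h

theorem tendsto_sinh_div_self : Tendsto (fun y => sinh y / y) (𝓝[>] 0) (𝓝 1) := by
  simpa [div_eq_inv_mul] using (hasDerivAt_sinh 0).tendsto_slope_zero_right

theorem tendsto_cosh_div_sinh_sub_inv_div_self :
    Tendsto (fun y => (cosh y / sinh y - 1 / y) / y) (𝓝[>] 0) (𝓝 (1 / 3)) := by
  have h := tendsto_mul_cosh_sub_sinh_div_pow_three.div tendsto_sinh_div_self one_ne_zero
  rw [div_one] at h
  refine h.congr' (eventually_nhdsWithin_of_forall fun y (hy : 0 < y) => ?_)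
  have := (sinh_pos_iff.mpr hy).ne'
  simp only [Pi.div_apply]
  field_simp

theorem tendsto_cosh_add_two_div_sinh_sub_div_self :
    Tendsto (fun y => ((cosh y + 2) / sinh y - 3 / y) / y) (𝓝[>] 0) (𝓝 0) := by
  have hy2 : Tendsto (fun y : ℝ => y ^ 2) (𝓝[>] 0) (𝓝 0) := by
    simpa using ((continuous_pow 2).tendsto (0 : ℝ)).mono_left nhdsWithin_le_nhds
  have h := (hy2.mul tendsto_mul_cosh_add_two_mul_sub_three_mul_sinh_div_pow_five).div
    tendsto_sinh_div_self one_ne_zero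
  rw [zero_mul, zero_div] at h
  refine h.congr' (eventually_nhdsWithin_of_forall fun y (hy : 0 < y) => ?_)
  have := (sinh_pos_iff.mpr hy).ne'
  simp only [Pi.div_apply]
  field_simp

theorem sqrt_three_sq : √3 ^ 2 = 3 := sq_sqrt (by norm_num)

theorem exp_two_mul_sqrt_three_mul (t : ℝ) : exp (2 * √3 * t) = exp (√3 * t) ^ 2 := by
  rw [← exp_nat_mul]
  ring_nf

theorem ξE_eq_cosh_div_sinh : ξE = fun t => √3 * cosh (√3 * t) / sinh (√3 * t) := by
  ext t
  rcases eq_or_ne t 0 with rfl | ht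
  · simp [ξE]
  have hs : sinh (√3 * t) ≠ 0 := by simp [ht]
  rw [sinh_eq, exp_neg] at hs
  rw [ξE, cosh_eq, sinh_eq, exp_two_mul_sqrt_three_mul, exp_neg]
  field_simp

theorem L1E_eq_cosh_add_two_div_sinh :
    L1E = fun t => (cosh (√3 * t) + 2) / (√3 * sinh (√3 * t)) := by
  ext t
  rcases eq_or_ne t 0 with rfl | ht
  · simp [L1E]
  have hs : sinh (√3 * t) ≠ 0 := by simp [ht]
  rw [sinh_eq, exp_neg] at hs
  rw [L1E, cosh_eq, sinh_eq, exp_two_mul_sqrt_three_mul, exp_neg]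
  field_simp
  ring

theorem L2E_eq_sinh_div_cosh_add_one :
    L2E = fun t => sinh (√3 * t) / (√3 * (cosh (√3 * t) + 1)) := by
  ext t
  have := exp_pos (√3 * t)
  rw [L2E, cosh_eq, sinh_eq, exp_neg]
  field_simp
  ring

theorem hasDerivAt_ξE {t : ℝ} (ht : t ≠ 0) : HasDerivAt ξE (-3 / sinh (√3 * t) ^ 2) t := by
  have hy := (hasDerivAt_id' t).const_mul √3
  have hs : sinh (√3 * t) ≠ 0 := by simp [ht]
  rw [ξE_eq_cosh_div_sinh]
  refine ((hy.cosh.const_mul √3).div hy.sinh hs).congr_deriv ?_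
  field_simp
  linear_combination (-√3 ^ 2) * cosh_sq (√3 * t) - sqrt_three_sq

theorem hasDerivAt_L1E {t : ℝ} (ht : t ≠ 0) :
    HasDerivAt L1E (-(2 * cosh (√3 * t) + 1) / sinh (√3 * t) ^ 2) t := by
  have hy := (hasDerivAt_id' t).const_mul √3
  have hs : sinh (√3 * t) ≠ 0 := by simp [ht]
  rw [L1E_eq_cosh_add_two_div_sinh]
  refine ((hy.cosh.add_const 2).div (hy.sinh.const_mul √3) (by simp [hs])).congr_deriv ?_
  field_simp
  linear_combination -cosh_sq (√3 * t)

theorem hasDerivAt_L2E (t : ℝ) : HasDerivAt L2E (1 / (cosh (√3 * t) + 1)) t := by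
  have hy := (hasDerivAt_id' t).const_mul √3
  have hc : cosh (√3 * t) + 1 ≠ 0 := by positivity
  rw [L2E_eq_sinh_div_cosh_add_one]
  refine (hy.sinh.div ((hy.cosh.add_const 1).const_mul √3) (by simp [hc])).congr_deriv ?_
  field_simp
  linear_combination cosh_sq (√3 * t)

theorem reducedSystem_ξE_L1E_L2E : ReducedSystem ξE L1E L2E := by
  intro t (ht : 0 < t)
  have hs : sinh (√3 * t) ≠ 0 := by simp [ht.ne']
  have hc : cosh (√3 * t) + 1 ≠ 0 := by positivity
  refine ⟨(hasDerivAt_ξE ht.ne').congr_deriv ?_, (hasDerivAt_L1E ht.ne').congr_deriv ?_,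
    (hasDerivAt_L2E t).congr_deriv ?_⟩ <;>
    simp only [ξE_eq_cosh_div_sinh, L1E_eq_cosh_add_two_div_sinh, L2E_eq_sinh_div_cosh_add_one] <;>
    field_simp
  · rw [sqrt_three_sq]
    linear_combination
      ((cosh (√3 * t) + 1) * (cosh (√3 * t) + 5) - 2 * sinh (√3 * t) ^ 2) * cosh_sq (√3 * t)
  · linear_combination cosh_sq (√3 * t)
  · ring

theorem tendsto_ξE_sub_inv_div_self : Tendsto (fun t => (ξE t - 1 / t) / t) (𝓝[>] 0) (𝓝 1) := by
  have h := (tendsto_cosh_div_sinh_sub_inv_div_self.comp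
    (tendsto_const_mul_nhdsGT_zero (c := √3) (by positivity))).const_mul 3
  rw [mul_one_div_cancel three_ne_zero] at h
  refine h.congr' (eventually_nhdsWithin_of_forall fun t (ht : 0 < t) => ?_)
  have := ht.ne'
  simp only [Function.comp, ξE_eq_cosh_div_sinh]
  field_simp
  rw [sqrt_three_sq]

theorem tendsto_L1E_sub_inv_div_self :
    Tendsto (fun t => (L1E t - 1 / t) / t) (𝓝[>] 0) (𝓝 0) := by
  refine (tendsto_cosh_add_two_div_sinh_sub_div_self.comp
    (tendsto_const_mul_nhdsGT_zero (c := √3) (by positivity))).congr'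
    (eventually_nhdsWithin_of_forall fun t (ht : 0 < t) => ?_)
  have := ht.ne'
  simp only [Function.comp, L1E_eq_cosh_add_two_div_sinh]
  field_simp
  linear_combination sinh (√3 * t) * sqrt_three_sq

theorem hasDerivAt_one_div {t : ℝ} (ht : t ≠ 0) : HasDerivAt (fun t => 1 / t) (-(1 / t ^ 2)) t := by
  simpa using hasDerivAt_inv ht

theorem continuousOn_one_div_sq : ContinuousOn (fun t : ℝ => 1 / t ^ 2) (Ioi 0) :=
  continuousOn_const.div (continuousOn_pow 2) fun _ ht => pow_ne_zero 2 (ne_of_gt ht)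

theorem exists_regular_part_ξE : ∃ g : ℝ → ℝ, ContDiffOn ℝ 1 g (Ici 0) ∧
    (∀ t ∈ Ioi (0 : ℝ), g t = ξE t - 1 / t) ∧ g 0 = 0 ∧ derivWithin g (Ici 0) 0 = 1 := by
  have hode := reducedSystem_ξE_L1E_L2E
  obtain ⟨-, hL1c, hL2c⟩ := hode.continuousOn
  have hinv := continuousOn_one_div_sq
  have hL1 := tendsto_L1E_sub_inv_div_self
  have hL2 : Tendsto L2E (𝓝[>] 0) (𝓝 0) := by
    simpa [L2E] using (hasDerivAt_L2E 0).continuousAt.tendsto.mono_left nhdsWithin_le_nhds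
  refine exists_contDiffOn_Ici_eqOn_Ioi (f' := fun t => 1 - L1E t ^ 2 - 2 * L2E t ^ 2 + 1 / t ^ 2)
    (fun t ht => ((hode t ht).1.sub (hasDerivAt_one_div (ne_of_gt ht))).congr_deriv (by ring))
    (by fun_prop) (tendsto_nhdsGT_zero_of_tendsto_div_self tendsto_ξE_sub_inv_div_self) ?_
  -- with `q = (L1 - 1/t)/t`: `1 - L1² - 2 L2² + 1/t² = 1 - 2q - t²q² - 2 L2²`
  have h := ((tendsto_const_nhds (x := (1 : ℝ))).sub (hL1.const_mul 2)).sub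
    (((tendsto_id.mono_left nhdsWithin_le_nhds).pow 2).mul (hL1.pow 2)) |>.sub
    ((hL2.pow 2).const_mul 2)
  norm_num at h
  refine h.congr' (eventually_nhdsWithin_of_forall fun t (ht : 0 < t) => ?_)
  field_simp
  ring

theorem exists_regular_part_L1E : ∃ g : ℝ → ℝ, ContDiffOn ℝ 1 g (Ici 0) ∧
    (∀ t ∈ Ioi (0 : ℝ), g t = L1E t - 1 / t) ∧ g 0 = 0 ∧ derivWithin g (Ici 0) 0 = 0 := by
  have hode := reducedSystem_ξE_L1E_L2E
  obtain ⟨hξc, hL1c, -⟩ := hode.continuousOn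
  have hinv := continuousOn_one_div_sq
  have hξ := tendsto_ξE_sub_inv_div_self
  have hL1 := tendsto_L1E_sub_inv_div_self
  refine exists_contDiffOn_Ici_eqOn_Ioi (f' := fun t => 1 - ξE t * L1E t + 1 / t ^ 2)
    (fun t ht => ((hode t ht).2.1.sub (hasDerivAt_one_div (ne_of_gt ht))).congr_deriv (by ring))
    (by fun_prop) (tendsto_nhdsGT_zero_of_tendsto_div_self hL1) ?_
  -- with `p = (ξ - 1/t)/t`, `q = (L1 - 1/t)/t`: `1 - ξ L1 + 1/t² = 1 - p - q - t²pq`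
  have h := (((tendsto_const_nhds (x := (1 : ℝ))).sub hξ).sub hL1).sub
    (((tendsto_id.mono_left nhdsWithin_le_nhds).pow 2).mul (hξ.mul hL1))
  norm_num at h
  refine h.congr' (eventually_nhdsWithin_of_forall fun t (ht : 0 < t) => ?_)
  field_simp
  ring

theorem exists_regular_part_L2E : ∃ g : ℝ → ℝ, ContDiffOn ℝ 1 g (Ici 0) ∧
    (∀ t ∈ Ioi (0 : ℝ), g t = L2E t) ∧ g 0 = 0 ∧ derivWithin g (Ici 0) 0 = 1 / 2 := by
  have hd : Continuous fun t => 1 / (cosh (√3 * t) + 1) :=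
    continuous_const.div (by fun_prop) fun t => by positivity
  refine exists_contDiffOn_Ici_eqOn_Ioi (fun t _ => hasDerivAt_L2E t) hd.continuousOn ?_ ?_
  · simpa [L2E] using (hasDerivAt_L2E 0).continuousAt.tendsto.mono_left nhdsWithin_le_nhds
  · rw [show (1 / 2 : ℝ) = 1 / (cosh (√3 * 0) + 1) by norm_num]
    exact (hd.tendsto 0).mono_left nhdsWithin_le_nhds

theorem reducedBC_zero_ξE_L1E_L2E : ReducedBC 0 ξE L1E L2E := by
  simp only [ReducedBC, mul_zero, zero_div, zero_add, neg_zero]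
  exact ⟨exists_regular_part_ξE, exists_regular_part_L1E, exists_regular_part_L2E⟩

theorem tendsto_exp_neg_sqrt_three_mul_atTop :
    Tendsto (fun t => exp (-(√3 * t))) atTop (𝓝 0) :=
  tendsto_exp_neg_atTop_nhds_zero.comp (tendsto_id.const_mul_atTop (by positivity))

theorem ξE_eq_exp_neg (t : ℝ) :
    ξE t = √3 * (1 + exp (-(√3 * t)) ^ 2) / (1 - exp (-(√3 * t)) ^ 2) := by
  have := exp_pos (√3 * t)
  rw [ξE, exp_two_mul_sqrt_three_mul, exp_neg]
  field_simp

theorem L1E_eq_exp_neg (t : ℝ) : L1E t =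
    (1 + 4 * exp (-(√3 * t)) + exp (-(√3 * t)) ^ 2) / (√3 * (1 - exp (-(√3 * t)) ^ 2)) := by
  have := exp_pos (√3 * t)
  rw [L1E, exp_two_mul_sqrt_three_mul, exp_neg]
  field_simp

theorem L2E_eq_exp_neg (t : ℝ) :
    L2E t = (1 - exp (-(√3 * t))) / (√3 * (1 + exp (-(√3 * t)))) := by
  have := exp_pos (√3 * t)
  rw [L2E, exp_neg]
  field_simp

theorem tendsto_ξE_atTop : Tendsto ξE atTop (𝓝 √3) := by
  have hF : ContinuousAt (fun v => √3 * (1 + v ^ 2) / (1 - v ^ 2)) 0 := by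
    fun_prop (disch := norm_num)
  convert hF.tendsto.comp tendsto_exp_neg_sqrt_three_mul_atTop using 1
  · exact funext ξE_eq_exp_neg
  · norm_num

theorem tendsto_L1E_atTop : Tendsto L1E atTop (𝓝 (1 / √3)) := by
  have hF : ContinuousAt (fun v => (1 + 4 * v + v ^ 2) / (√3 * (1 - v ^ 2))) 0 := by
    fun_prop (disch := norm_num)
  convert hF.tendsto.comp tendsto_exp_neg_sqrt_three_mul_atTop using 1
  · exact funext L1E_eq_exp_neg
  · norm_num

theorem tendsto_L2E_atTop : Tendsto L2E atTop (𝓝 (1 / √3)) := by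
  have hF : ContinuousAt (fun v => (1 - v) / (√3 * (1 + v))) 0 := by
    fun_prop (disch := norm_num)
  convert hF.tendsto.comp tendsto_exp_neg_sqrt_three_mul_atTop using 1
  · exact funext L2E_eq_exp_neg
  · norm_num

theorem explicit_einstein_solution :
    ReducedSystem ξE L1E L2E ∧ ReducedBC 0 ξE L1E L2E ∧
    Tendsto ξE atTop (nhds (Real.sqrt 3)) ∧
    Tendsto L1E atTop (nhds (1 / Real.sqrt 3)) ∧
    Tendsto L2E atTop (nhds (1 / Real.sqrt 3)) :=
  ⟨reducedSystem_ξE_L1E_L2E, reducedBC_zero_ξE_L1E_L2E, tendsto_ξE_atTop, tendsto_L1E_atTop,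
    tendsto_L2E_atTop⟩
end

section
/- Let α > 0 and let ξ, L1, L2 : (0,∞) → ℝ be differentiable solutions of the reduced U(2)-invariant expander system satisfying the boundary conditions at 0 with parameter α. Then lim_{t→∞} ξ(t)/t = 1 and lim_{t→∞} t·L1(t) = 1 and lim_{t→∞} t·L2(t) = 1. Moreover, if R : (0,∞) → (0,∞) is differentiable with R' = −R·L1 on (0,∞), then limsup_{t→∞} t·R(t) < ∞. -/
/-!
Write `σ = L1 + 2 L2`, call `ξ - σ` the gap and `ξ² - L1² - 2 L2²` the energy; the energy has
derivative twice the gap. Near `0` the boundary conditions give a time at which `L1, L2 > 0`,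
the gap is positive and the energy exceeds `2`. These inequalities persist, which forces `ξ` to
be unbounded, and then traps the solution in the region `σ < 1/2`, where `ξ' ≥ 3/4`. Once
`ξ → ∞`, the equations `y' = -ξ y + q` satisfied by `σ` and by `ξ Li - 1` give `Li → 0`, hence
`ξ' → 1` and `ξ ~ t`, and `ξ Li → 1`, hence `t Li → 1`. Finally
`(ξ R)' = -R (ξ L1 - 1) - R (L1² + 2 L2²)`, and `ξ L1 - 1` is bounded below by an exponentially
small term, so `ξ R` and therefore `t R` stay bounded.
-/

open Set Filter

open Topology

theorem mul_sub_le_image_sub_of_le_hasDerivAt {f f' : ℝ → ℝ} {a b C : ℝ} (hab : a ≤ b)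
    (hf : ∀ t ∈ Icc a b, HasDerivAt f (f' t) t) (hC : ∀ t ∈ Icc a b, C ≤ f' t) :
    C * (b - a) ≤ f b - f a := by
  have hmono : MonotoneOn (fun t => f t - C * t) (Icc a b) := by
    refine monotoneOn_of_hasDerivWithinAt_nonneg (f' := fun t => f' t - C * 1) (convex_Icc a b)
      (fun t ht => ((hf t ht).continuousAt.sub (continuousAt_const.mul continuousAt_id))
        |>.continuousWithinAt)
      (fun t ht => ((hf t (interior_subset ht)).sub
        ((hasDerivAt_id' t).const_mul C)).hasDerivWithinAt)
      fun t ht => by linarith [hC t (interior_subset ht)]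
  have := hmono (left_mem_Icc.2 hab) (right_mem_Icc.2 hab) hab
  simp only at this
  linarith

theorem image_sub_le_mul_sub_of_hasDerivAt_le {f f' : ℝ → ℝ} {a b C : ℝ} (hab : a ≤ b)
    (hf : ∀ t ∈ Icc a b, HasDerivAt f (f' t) t) (hC : ∀ t ∈ Icc a b, f' t ≤ C) :
    f b - f a ≤ C * (b - a) := by
  have := mul_sub_le_image_sub_of_le_hasDerivAt hab (fun t ht => (hf t ht).neg)
    fun t ht => neg_le_neg (hC t ht)
  simp only [Pi.neg_apply] at this
  linarith

theorem tendsto_atTop_of_le_hasDerivAt {f f' : ℝ → ℝ} {δ : ℝ} (hδ : 0 < δ)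
    (hf : ∀ᶠ t in atTop, HasDerivAt f (f' t) t) (hf' : ∀ᶠ t in atTop, δ ≤ f' t) :
    Tendsto f atTop atTop := by
  obtain ⟨T, hT⟩ := eventually_atTop.1 (hf.and hf')
  refine tendsto_atTop_mono' _ ?_
    (tendsto_atTop_add_const_left _ (f T - δ * T) (tendsto_id.const_mul_atTop hδ))
  filter_upwards [eventually_ge_atTop T] with t ht
  have := mul_sub_le_image_sub_of_le_hasDerivAt ht (fun u hu => (hT u hu.1).1)
    fun u hu => (hT u hu.1).2
  simp only [id]
  linarith

theorem forall_lt_of_hasDerivAt_neg_of_eq {f f' : ℝ → ℝ} {a c : ℝ}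
    (hf : ∀ t ≥ a, HasDerivAt f (f' t) t) (ha : f a < c)
    (hc : ∀ s > a, f s = c → (∀ u ∈ Ico a s, f u < c) → f' s < 0) :
    ∀ t ≥ a, f t < c := by
  intro t ht
  by_contra! hct
  have hclosed : IsClosed (Icc a t ∩ f ⁻¹' Ici c) :=
    ContinuousOn.preimage_isClosed_of_isClosed
      (fun u hu => (hf u hu.1).continuousAt.continuousWithinAt) isClosed_Icc isClosed_Ici
  obtain ⟨s, ⟨⟨has, -⟩, hcs⟩, hmin⟩ :=
    (isCompact_Icc.of_isClosed_subset hclosed inter_subset_left).exists_isLeast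
      ⟨t, ⟨ht, le_rfl⟩, hct⟩
  have hbefore : ∀ u ∈ Ico a s, f u < c := fun u hu =>
    not_le.1 fun hcu => hu.2.not_ge (hmin ⟨⟨hu.1, hu.2.le.trans (hmin ⟨⟨ht, le_rfl⟩, hct⟩)⟩, hcu⟩)
  have has : a < s := has.lt_of_ne fun h => (h ▸ ha).not_ge hcs
  have hderiv := hf s has.le
  have hleft : Ioo a s ∈ 𝓝[<] s := Ioo_mem_nhdsLT has
  have hsc : f s = c := le_antisymm (le_of_tendsto
    (hderiv.continuousAt.tendsto.mono_left nhdsWithin_le_nhds)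
    (eventually_of_mem hleft fun u hu => (hbefore u ⟨hu.1.le, hu.2⟩).le)) hcs
  refine (hc s has hsc hbefore).not_ge (ge_of_tendsto hderiv.tendsto_slope_zero_left ?_)
  filter_upwards [Ioo_mem_nhdsLT (sub_neg.2 has)] with h hh
  have := hbefore (s + h) ⟨by linarith [hh.1], by linarith [hh.2]⟩
  rw [smul_eq_mul, hsc]
  exact mul_nonneg_of_nonpos_of_nonpos (inv_nonpos.2 hh.2.le) (by linarith)

theorem forall_lt_of_hasDerivAt_pos_of_eq {f f' : ℝ → ℝ} {a c : ℝ}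
    (hf : ∀ t ≥ a, HasDerivAt f (f' t) t) (ha : c < f a)
    (hc : ∀ s > a, f s = c → (∀ u ∈ Ico a s, c < f u) → 0 < f' s) :
    ∀ t ≥ a, c < f t := by
  have := forall_lt_of_hasDerivAt_neg_of_eq (f := -f) (c := -c) (fun t ht => (hf t ht).neg)
    (neg_lt_neg ha) fun s hs hsc hbefore => neg_neg_of_pos
      (hc s hs (neg_inj.1 hsc) fun u hu => neg_lt_neg_iff.1 (hbefore u hu))
  exact fun t ht => neg_lt_neg_iff.1 (this t ht)

theorem eventually_lt_of_hasDerivAt_le_neg {z z' : ℝ → ℝ} {c δ : ℝ} (hδ : 0 < δ)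
    (hz : ∀ᶠ t in atTop, HasDerivAt z (z' t) t)
    (hdec : ∀ᶠ t in atTop, c ≤ z t → z' t ≤ -δ) :
    ∀ᶠ t in atTop, z t < c := by
  obtain ⟨T, hT⟩ := eventually_atTop.1 (hz.and hdec)
  obtain ⟨t₀, ht₀, hlt⟩ : ∃ t₀ ≥ T, z t₀ < c := by
    by_contra! hge
    have hdown : Tendsto (fun t => -z t) atTop atTop :=
      tendsto_atTop_of_le_hasDerivAt hδ (eventually_atTop.2 ⟨T, fun t ht => (hT t ht).1.neg⟩)
        (eventually_atTop.2 ⟨T, fun t ht => le_neg.1 ((hT t ht).2 (hge t ht))⟩)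
    obtain ⟨t, ht, hT'⟩ := ((hdown.eventually_gt_atTop (-c)).and (eventually_ge_atTop T)).exists
    linarith [hge t hT']
  exact eventually_atTop.2 ⟨t₀, forall_lt_of_hasDerivAt_neg_of_eq
    (fun t ht => (hT t (ht₀.trans ht)).1) hlt
    fun s hs hsc _ => ((hT s (ht₀.trans hs.le)).2 hsc.ge).trans_lt (neg_lt_zero.2 hδ)⟩

theorem tendsto_zero_of_hasDerivAt_neg_mul_add {y p q : ℝ → ℝ}
    (hy : ∀ᶠ t in atTop, HasDerivAt y (-p t * y t + q t) t)
    (hp : Tendsto p atTop atTop) (hq : Tendsto (fun t => q t / p t) atTop (𝓝 0)) :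
    Tendsto y atTop (𝓝 0) := by
  rw [Metric.tendsto_nhds]
  intro ε hε
  -- `y²` decreases at rate at least `ε²` as long as `|y| ≥ ε`.
  have hsq : ∀ᶠ t in atTop, y t ^ 2 < ε ^ 2 := by
    refine eventually_lt_of_hasDerivAt_le_neg (δ := ε ^ 2) (by positivity)
      (z' := fun t => 2 * y t * (-p t * y t + q t))
      (hy.mono fun t ht => (ht.pow 2).congr_deriv (by ring)) ?_
    filter_upwards [hp.eventually_ge_atTop 1,
      (Metric.tendsto_nhds.1 hq) (ε / 2) (half_pos hε)] with t hp1 hqt hge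
    have hp0 : 0 < p t := by linarith
    rw [Real.dist_eq, sub_zero, abs_div, abs_of_pos hp0, div_lt_iff₀ hp0] at hqt
    have hεy : ε ≤ |y t| := by simpa [abs_of_pos hε] using sq_le_sq.1 hge
    have hyq : y t * q t ≤ |y t| * |q t| := by rw [← abs_mul]; exact le_abs_self _
    have hεy' : ε * |y t| ≤ y t ^ 2 := by
      rw [← sq_abs]; exact pow_two |y t| ▸ mul_le_mul_of_nonneg_right hεy (abs_nonneg _)
    have : |y t| * |q t| ≤ |y t| * (ε / 2 * p t) := by gcongr
    nlinarith
  filter_upwards [hsq] with t ht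
  simpa using abs_lt_of_sq_lt_sq ht hε.le

theorem tendsto_div_id_of_tendsto_hasDerivAt {f f' : ℝ → ℝ} {l : ℝ}
    (hf : ∀ᶠ t in atTop, HasDerivAt f (f' t) t) (hf' : Tendsto f' atTop (𝓝 l)) :
    Tendsto (fun t => f t / t) atTop (𝓝 l) := by
  set g := fun t => f t - l * t
  suffices hg : Tendsto (fun t => g t / t) atTop (𝓝 0) by
    rw [← zero_add l]
    refine (hg.add_const l).congr' ?_
    filter_upwards [eventually_ne_atTop 0] with t ht
    simp only [g]
    field_simp
    ring
  rw [Metric.tendsto_nhds]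
  intro ε hε
  obtain ⟨T, hT⟩ := eventually_atTop.1 ((hf.and ((Metric.tendsto_nhds.1 hf') (ε / 2)
    (half_pos hε))).and (eventually_gt_atTop 0))
  have hgrowth : ∀ t ≥ T, |g t - g T| ≤ ε / 2 * (t - T) := fun t ht =>
    norm_image_sub_le_of_norm_deriv_le_segment' (f' := fun u => f' u - l)
      (fun u hu => ((hT u hu.1).1.1.sub ((hasDerivAt_id u).const_mul l)).hasDerivWithinAt
        |>.congr_deriv (by simp))
      (fun u hu => (hT u hu.1).1.2.le) t ⟨ht, le_rfl⟩
  filter_upwards [eventually_ge_atTop T, eventually_gt_atTop (2 * |g T| / ε)] with t ht hlarge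
  have htpos : 0 < t := (hT T le_rfl).2.trans_le ht
  rw [Real.dist_eq, sub_zero, abs_div, abs_of_pos htpos, div_lt_iff₀ htpos]
  rw [div_lt_iff₀ hε] at hlarge
  have := abs_sub_abs_le_abs_sub (g t) (g T)
  nlinarith [hgrowth t ht, (hT T le_rfl).2]

theorem forall_pos_of_hasDerivAt_one_sub_mul {ξ L : ℝ → ℝ} {a : ℝ}
    (hL : ∀ t ≥ a, HasDerivAt L (1 - ξ t * L t) t) (ha : 0 < L a) : ∀ t ≥ a, 0 < L t :=
  forall_lt_of_hasDerivAt_pos_of_eq hL ha fun s _ hs _ => by simp [hs]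

theorem neg_mul_exp_lt_of_neg_mul_le_hasDerivAt {y y' p : ℝ → ℝ} {a B : ℝ} (hB : 0 < B)
    (hya : -B < y a) (hy : ∀ t ≥ a, HasDerivAt y (y' t) t) (hp : ∀ t ≥ a, 1 < p t)
    (hy' : ∀ t ≥ a, -p t * y t ≤ y' t) :
    ∀ t ≥ a, -B * Real.exp (a - t) < y t := by
  have hexp : ∀ t, HasDerivAt (fun t => B * Real.exp (a - t)) (-(B * Real.exp (a - t))) t :=
    fun t => (((hasDerivAt_id' t).const_sub a).exp.const_mul B).congr_deriv (by ring)
  have := forall_lt_of_hasDerivAt_pos_of_eq (f := fun t => y t + B * Real.exp (a - t)) (c := 0)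
    (fun t ht => (hy t ht).add (hexp t)) (by simpa using neg_lt_iff_pos_add.1 hya)
    fun s hs hsc _ => by
      have hys : y s = -(B * Real.exp (a - s)) := by linarith
      have := hy' s hs.le
      have : 0 < (p s - 1) * (B * Real.exp (a - s)) :=
        mul_pos (by linarith [hp s hs.le]) (by positivity)
      rw [hys] at *
      nlinarith
  intro t ht
  linarith [this t ht]

theorem sq_add_two_mul_sq_le_of_le {x y b : ℝ} (hx : 0 ≤ x) (hy : 0 ≤ y) (hb : x + 2 * y ≤ b) :
    x ^ 2 + 2 * y ^ 2 ≤ b ^ 2 := by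
  nlinarith [mul_nonneg hx hy]

theorem tendsto_div_of_contDiffOn {g : ℝ → ℝ} {v : ℝ} (hg : ContDiffOn ℝ 1 g (Ici 0))
    (h0 : g 0 = 0) (hv : derivWithin g (Ici 0) 0 = v) :
    Tendsto (fun t => g t / t) (𝓝[>] 0) (𝓝 v) := by
  have hderiv := (hv ▸ ((hg.differentiableOn one_ne_zero) 0 self_mem_Ici).hasDerivWithinAt
    : HasDerivWithinAt g v (Ici 0) 0).Ioi_of_Ici
  rw [hasDerivWithinAt_iff_tendsto_slope' self_notMem_Ioi] at hderiv
  exact hderiv.congr fun t => by simp [slope_def_field, h0]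

theorem tendsto_id_mul_of_tendsto_div_id {f g : ℝ → ℝ}
    (hf : Tendsto (fun t => f t / t) atTop (𝓝 1)) (hfg : Tendsto (fun t => f t * g t) atTop (𝓝 1)) :
    Tendsto (fun t => t * g t) atTop (𝓝 1) := by
  refine (div_one (1 : ℝ) ▸ hfg.div hf one_ne_zero).congr' ?_
  filter_upwards [hf.eventually_ne one_ne_zero, eventually_ne_atTop 0] with t hft ht
  have : f t ≠ 0 := by rintro h; simp [h] at hft
  simp only [Pi.div_apply]
  field_simp

theorem eventually_hasDerivAt_of_pos {f f' : ℝ → ℝ} (hf : ∀ t, 0 < t → HasDerivAt f (f' t) t) :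
    ∀ᶠ t in atTop, HasDerivAt f (f' t) t :=
  (eventually_gt_atTop 0).mono hf

theorem ReducedBC.eventually_pos_gap_pos_energy_gt {α : ℝ} {ξ L1 L2 : ℝ → ℝ} (hα : 0 < α)
    (hbc : ReducedBC α ξ L1 L2) :
    ∀ᶠ t in 𝓝[>] 0, 0 < L1 t ∧ 0 < L2 t ∧ L1 t + 2 * L2 t < ξ t ∧
      2 < ξ t ^ 2 - (L1 t ^ 2 + 2 * L2 t ^ 2) := by
  obtain ⟨⟨g₀, hg₀, hξ, h₀, hv₀⟩, ⟨g₁, hg₁, hL1, h₁, hv₁⟩, ⟨g₂, hg₂, hL2, h₂, hv₂⟩⟩ := hbc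
  have r₀ := tendsto_div_of_contDiffOn hg₀ h₀ hv₀
  have r₁ := tendsto_div_of_contDiffOn hg₁ h₁ hv₁
  have r₂ := tendsto_div_of_contDiffOn hg₂ h₂ hv₂
  have ht : Tendsto (fun t : ℝ => t) (𝓝[>] 0) (𝓝 0) := tendsto_nhdsWithin_of_tendsto_nhds tendsto_id
  have hL1_lim : Tendsto (fun t => 1 + t ^ 2 * (g₁ t / t)) (𝓝[>] 0) (𝓝 1) := by
    simpa using tendsto_const_nhds.add ((ht.pow 2).mul r₁)
  have hgap_lim : Tendsto (fun t => g₀ t / t - g₁ t / t - 2 * (g₂ t / t)) (𝓝[>] 0) (𝓝 α) := by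
    convert (r₀.sub r₁).sub (r₂.const_mul 2) using 2
    ring
  have henergy_lim : Tendsto (fun t => (g₀ t / t - g₁ t / t) * (2 + t ^ 2 * (g₀ t / t + g₁ t / t))
      - 2 * t ^ 2 * (g₂ t / t) ^ 2) (𝓝[>] 0) (𝓝 (2 * α + 2)) := by
    convert ((r₀.sub r₁).mul (tendsto_const_nhds.add ((ht.pow 2).mul (r₀.add r₁)))).sub
      (((ht.pow 2).const_mul 2).mul (r₂.pow 2)) using 2
    ring
  filter_upwards [hL1_lim.eventually (lt_mem_nhds one_pos),
    r₂.eventually (lt_mem_nhds one_half_pos), hgap_lim.eventually (lt_mem_nhds hα),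
    henergy_lim.eventually (lt_mem_nhds (by linarith : (2 : ℝ) < 2 * α + 2)),
    self_mem_nhdsWithin] with t hL1_pos hL2_pos hgap_pos henergy_gt (ht : 0 < t)
  have eξ : ξ t = 1 / t + t * (g₀ t / t) := by rw [hξ t ht]; field_simp; ring
  have eL1 : L1 t = (1 + t ^ 2 * (g₁ t / t)) / t := by rw [hL1 t ht]; field_simp; ring
  have eL2 : L2 t = t * (g₂ t / t) := by rw [← hL2 t ht]; field_simp
  refine ⟨eL1 ▸ div_pos (by linarith) ht, eL2 ▸ mul_pos ht hL2_pos, ?_, ?_⟩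
  · have : ξ t - (L1 t + 2 * L2 t) = t * (g₀ t / t - g₁ t / t - 2 * (g₂ t / t)) := by
      rw [eξ, eL1, eL2]; field_simp; ring
    nlinarith [mul_pos ht hgap_pos]
  · have : ξ t ^ 2 - (L1 t ^ 2 + 2 * L2 t ^ 2) = (g₀ t / t - g₁ t / t) *
        (2 + t ^ 2 * (g₀ t / t + g₁ t / t)) - 2 * t ^ 2 * (g₂ t / t) ^ 2 := by
      rw [eξ, eL1, eL2]; field_simp; ring
    linarith

namespace ReducedSystem

variable {ξ L1 L2 : ℝ → ℝ}

theorem hasDerivAt_xi (h : ReducedSystem ξ L1 L2) {t : ℝ} (ht : 0 < t) :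
    HasDerivAt ξ (1 - L1 t ^ 2 - 2 * L2 t ^ 2) t :=
  (h t ht).1

theorem hasDerivAt_L1 (h : ReducedSystem ξ L1 L2) {t : ℝ} (ht : 0 < t) :
    HasDerivAt L1 (1 - ξ t * L1 t) t :=
  (h t ht).2.1

theorem hasDerivAt_L2 (h : ReducedSystem ξ L1 L2) {t : ℝ} (ht : 0 < t) :
    HasDerivAt L2 (1 - ξ t * L2 t) t :=
  (h t ht).2.2

theorem hasDerivAt_sigma (h : ReducedSystem ξ L1 L2) {t : ℝ} (ht : 0 < t) :
    HasDerivAt (fun t => L1 t + 2 * L2 t) (3 - ξ t * (L1 t + 2 * L2 t)) t :=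
  ((h.hasDerivAt_L1 ht).add ((h.hasDerivAt_L2 ht).const_mul 2)).congr_deriv (by ring)

theorem hasDerivAt_gap (h : ReducedSystem ξ L1 L2) {t : ℝ} (ht : 0 < t) :
    HasDerivAt (fun t => ξ t - (L1 t + 2 * L2 t))
      (ξ t ^ 2 - (L1 t ^ 2 + 2 * L2 t ^ 2) - 2 - ξ t * (ξ t - (L1 t + 2 * L2 t))) t :=
  ((h.hasDerivAt_xi ht).sub (h.hasDerivAt_sigma ht)).congr_deriv (by ring)

theorem hasDerivAt_energy (h : ReducedSystem ξ L1 L2) {t : ℝ} (ht : 0 < t) :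
    HasDerivAt (fun t => ξ t ^ 2 - (L1 t ^ 2 + 2 * L2 t ^ 2))
      (2 * (ξ t - (L1 t + 2 * L2 t))) t := by
  refine (((h.hasDerivAt_xi ht).pow 2).sub (((h.hasDerivAt_L1 ht).pow 2).add
    (((h.hasDerivAt_L2 ht).pow 2).const_mul 2))).congr_deriv ?_
  push_cast
  ring

theorem hasDerivAt_xi_mul_sub_one (h : ReducedSystem ξ L1 L2) {L : ℝ → ℝ} {t : ℝ} (ht : 0 < t)
    (hL : HasDerivAt L (1 - ξ t * L t) t) :
    HasDerivAt (fun t => ξ t * L t - 1)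
      (-ξ t * (ξ t * L t - 1) + L t * (1 - (L1 t ^ 2 + 2 * L2 t ^ 2))) t :=
  (((h.hasDerivAt_xi ht).mul hL).sub_const 1).congr_deriv (by ring)

/-- At a first zero of the gap, its derivative is `energy - 2 > 0`, since the energy has not
decreased while the gap was nonnegative. -/
theorem gap_pos_and_energy_ge (h : ReducedSystem ξ L1 L2) {a : ℝ} (ha : 0 < a)
    (hgap : L1 a + 2 * L2 a < ξ a) (hE : 2 < ξ a ^ 2 - (L1 a ^ 2 + 2 * L2 a ^ 2)) :
    ∀ t ≥ a, L1 t + 2 * L2 t < ξ t ∧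
      ξ a ^ 2 - (L1 a ^ 2 + 2 * L2 a ^ 2) ≤ ξ t ^ 2 - (L1 t ^ 2 + 2 * L2 t ^ 2) := by
  have hmono : ∀ s ≥ a, (∀ u ∈ Icc a s, L1 u + 2 * L2 u ≤ ξ u) →
      ξ a ^ 2 - (L1 a ^ 2 + 2 * L2 a ^ 2) ≤ ξ s ^ 2 - (L1 s ^ 2 + 2 * L2 s ^ 2) :=
    fun s hs hle => by
      have := mul_sub_le_image_sub_of_le_hasDerivAt (C := 0) hs
        (fun u hu => h.hasDerivAt_energy (ha.trans_le hu.1)) fun u hu => by linarith [hle u hu]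
      linarith
  have hpos := forall_lt_of_hasDerivAt_pos_of_eq (c := 0)
    (fun t ht => h.hasDerivAt_gap (ha.trans_le ht)) (by linarith) fun s hs hs0 hbefore => by
      have := hmono s hs.le fun u hu => hu.2.eq_or_lt.elim (fun hus => by subst hus; linarith)
        fun hus => by linarith [hbefore u ⟨hu.1, hus⟩]
      rw [hs0]
      linarith
  exact fun t ht => ⟨by linarith [hpos t ht], hmono t ht fun u hu => by linarith [hpos u hu.1]⟩

/-- If `ξ` stayed below `M`, the gap would be pushed above `(κ - 2) / (2 M)`, and the energy,
growing at twice that rate, would exceed `ξ² ≤ M²`. -/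
theorem frequently_lt_xi (h : ReducedSystem ξ L1 L2) {a κ : ℝ} (hκ : 2 < κ)
    (hinv : ∀ t ≥ a, 0 ≤ L1 t + 2 * L2 t ∧ L1 t + 2 * L2 t < ξ t ∧
      κ ≤ ξ t ^ 2 - (L1 t ^ 2 + 2 * L2 t ^ 2)) (M : ℝ) :
    ∃ᶠ t in atTop, M < ξ t := by
  by_contra hM
  simp only [not_frequently, not_lt] at hM
  obtain ⟨t₀, ht₀M, ht₀a⟩ := (hM.and (eventually_ge_atTop a)).exists
  have hM0 : 0 < M := by linarith [hinv t₀ ht₀a]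
  set c := (κ - 2) / (2 * M)
  have hgap : ∀ᶠ t in atTop, -(ξ t - (L1 t + 2 * L2 t)) < -c := by
    refine eventually_lt_of_hasDerivAt_le_neg (δ := (κ - 2) / 2) (by linarith)
      (eventually_hasDerivAt_of_pos fun t ht => (h.hasDerivAt_gap ht).neg) ?_
    filter_upwards [hM, eventually_ge_atTop a] with t htM hta hle
    obtain ⟨-, hσξ, hκt⟩ := hinv t hta
    have : ξ t * (ξ t - (L1 t + 2 * L2 t)) ≤ M * c :=
      mul_le_mul htM (by linarith) (by linarith) hM0.le
    have : M * c = (κ - 2) / 2 := by simp only [c]; field_simp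
    linarith
  have henergy : Tendsto (fun t => ξ t ^ 2 - (L1 t ^ 2 + 2 * L2 t ^ 2)) atTop atTop :=
    tendsto_atTop_of_le_hasDerivAt (δ := 2 * c) (by positivity)
      (eventually_hasDerivAt_of_pos fun t ht => h.hasDerivAt_energy ht)
      (hgap.mono fun t ht => by linarith)
  obtain ⟨t, htE, htM, hta⟩ :=
    ((henergy.eventually_gt_atTop (M ^ 2)).and (hM.and (eventually_ge_atTop a))).exists
  obtain ⟨hσ, hσξ, -⟩ := hinv t hta
  nlinarith [sq_nonneg (L1 t), sq_nonneg (L2 t)]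

theorem eventually_sigma_lt_two (h : ReducedSystem ξ L1 L2)
    (hinv : ∀ᶠ t in atTop, 0 ≤ L1 t + 2 * L2 t ∧ L1 t + 2 * L2 t < ξ t) :
    ∀ᶠ t in atTop, L1 t + 2 * L2 t < 2 :=
  eventually_lt_of_hasDerivAt_le_neg (δ := 1) one_pos
    (eventually_hasDerivAt_of_pos fun t ht => h.hasDerivAt_sigma ht)
    (hinv.mono fun t ⟨h0, hξ⟩ h2 => by nlinarith)

/-- Once `ξ` is large, `L1 + 2 L2` drops below `1/2` within unit time, and then stays there
because `ξ` cannot decrease while `L1² + 2 L2² < 1`. -/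
theorem eventually_sigma_lt_half (h : ReducedSystem ξ L1 L2)
    (hpos : ∀ᶠ t in atTop, 0 ≤ L1 t ∧ 0 ≤ L2 t) (hσ : ∀ᶠ t in atTop, L1 t + 2 * L2 t < 2)
    (hξ : ∀ M, ∃ᶠ t in atTop, M < ξ t) :
    ∀ᶠ t in atTop, L1 t + 2 * L2 t < 1 / 2 := by
  obtain ⟨T, hT⟩ := eventually_atTop.1 ((hpos.and hσ).and (eventually_gt_atTop 0))
  have hS : ∀ t ≥ T, ∀ b, L1 t + 2 * L2 t ≤ b → L1 t ^ 2 + 2 * L2 t ^ 2 ≤ b ^ 2 :=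
    fun t ht b hb => sq_add_two_mul_sq_le_of_le (hT t ht).1.1.1 (hT t ht).1.1.2 hb
  have hderiv : ∀ t ≥ T, HasDerivAt ξ (1 - L1 t ^ 2 - 2 * L2 t ^ 2) t ∧
      HasDerivAt (fun t => L1 t + 2 * L2 t) (3 - ξ t * (L1 t + 2 * L2 t)) t :=
    fun t ht => ⟨h.hasDerivAt_xi (hT t ht).2, h.hasDerivAt_sigma (hT t ht).2⟩
  obtain ⟨t₁, hξ₁, ht₁⟩ := ((hξ 30).and_eventually (eventually_ge_atTop T)).exists
  have hξ_large : ∀ t ∈ Icc t₁ (t₁ + 1), 27 ≤ ξ t := fun t ht => by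
    have := mul_sub_le_image_sub_of_le_hasDerivAt (C := -3) ht.1
      (fun u hu => (hderiv u (ht₁.trans hu.1)).1)
      fun u hu => by linarith [hS u (ht₁.trans hu.1) 2 (hT u (ht₁.trans hu.1)).1.2.le]
    linarith [ht.2]
  obtain ⟨t₂, ht₂, hσ₂⟩ : ∃ t₂ ∈ Icc t₁ (t₁ + 1), L1 t₂ + 2 * L2 t₂ < 1 / 2 := by
    by_contra! hge
    have := image_sub_le_mul_sub_of_hasDerivAt_le (C := -10) (le_add_of_nonneg_right zero_le_one)
      (fun u hu => (hderiv u (ht₁.trans hu.1)).2)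
      fun u hu => by nlinarith [hge u hu, hξ_large u hu]
    linarith [(hT t₁ ht₁).1.2, (hT (t₁ + 1) (by linarith)).1.1.1, (hT (t₁ + 1) (by linarith)).1.1.2]
  refine eventually_atTop.2 ⟨t₂, forall_lt_of_hasDerivAt_neg_of_eq
    (fun t ht => (hderiv t (ht₁.trans (ht₂.1.trans ht))).2) hσ₂ fun s hs hs_eq hbefore => ?_⟩
  have hξ_mono := mul_sub_le_image_sub_of_le_hasDerivAt (C := 0) hs.le
    (fun u hu => (hderiv u (ht₁.trans (ht₂.1.trans hu.1))).1) fun u hu => by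
      have hσu : L1 u + 2 * L2 u ≤ 1 / 2 :=
        hu.2.eq_or_lt.elim (fun hus => hus ▸ hs_eq.le) fun hus => (hbefore u ⟨hu.1, hus⟩).le
      linarith [hS u (ht₁.trans (ht₂.1.trans hu.1)) _ hσu]
  rw [hs_eq]
  linarith [hξ_large t₂ ht₂]

theorem eventually_trapped (h : ReducedSystem ξ L1 L2) {a : ℝ} (ha : 0 < a) (hL1 : 0 < L1 a)
    (hL2 : 0 < L2 a) (hgap : L1 a + 2 * L2 a < ξ a)
    (hE : 2 < ξ a ^ 2 - (L1 a ^ 2 + 2 * L2 a ^ 2)) :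
    ∀ᶠ t in atTop, 0 ≤ L1 t ∧ 0 ≤ L2 t ∧ L1 t + 2 * L2 t < 1 / 2 := by
  have hL1 := forall_pos_of_hasDerivAt_one_sub_mul
    (fun t ht => h.hasDerivAt_L1 (ha.trans_le ht)) hL1
  have hL2 := forall_pos_of_hasDerivAt_one_sub_mul
    (fun t ht => h.hasDerivAt_L2 (ha.trans_le ht)) hL2
  have hinv := h.gap_pos_and_energy_ge ha hgap hE
  have hσ : ∀ t ≥ a, 0 ≤ L1 t + 2 * L2 t := fun t ht => by linarith [hL1 t ht, hL2 t ht]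
  have hpos : ∀ᶠ t in atTop, 0 ≤ L1 t ∧ 0 ≤ L2 t :=
    eventually_atTop.2 ⟨a, fun t ht => ⟨(hL1 t ht).le, (hL2 t ht).le⟩⟩
  have hsmall := h.eventually_sigma_lt_half hpos
    (h.eventually_sigma_lt_two (eventually_atTop.2 ⟨a, fun t ht => ⟨hσ t ht, (hinv t ht).1⟩⟩))
    (h.frequently_lt_xi hE fun t ht => ⟨hσ t ht, hinv t ht⟩)
  filter_upwards [hpos, hsmall] with t ht hσt using ⟨ht.1, ht.2, hσt⟩

theorem tendsto_xi_atTop (h : ReducedSystem ξ L1 L2)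
    (hreg : ∀ᶠ t in atTop, 0 ≤ L1 t ∧ 0 ≤ L2 t ∧ L1 t + 2 * L2 t < 1 / 2) :
    Tendsto ξ atTop atTop :=
  tendsto_atTop_of_le_hasDerivAt (δ := 3 / 4) (by norm_num)
    (eventually_hasDerivAt_of_pos fun t ht => h.hasDerivAt_xi ht)
    (hreg.mono fun t ⟨h1, h2, h3⟩ => by linarith [sq_add_two_mul_sq_le_of_le h1 h2 h3.le])

theorem tendsto_L1_L2_zero (h : ReducedSystem ξ L1 L2)
    (hreg : ∀ᶠ t in atTop, 0 ≤ L1 t ∧ 0 ≤ L2 t ∧ L1 t + 2 * L2 t < 1 / 2)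
    (hξ : Tendsto ξ atTop atTop) :
    Tendsto L1 atTop (𝓝 0) ∧ Tendsto L2 atTop (𝓝 0) := by
  have hσ : Tendsto (fun t => L1 t + 2 * L2 t) atTop (𝓝 0) :=
    tendsto_zero_of_hasDerivAt_neg_mul_add (q := fun _ => 3)
      (eventually_hasDerivAt_of_pos fun t ht => (h.hasDerivAt_sigma ht).congr_deriv (by ring)) hξ
      (tendsto_const_nhds.div_atTop hξ)
  exact ⟨squeeze_zero' (hreg.mono fun t ht => ht.1) (hreg.mono fun t ht => by linarith [ht.2.1]) hσ,
    squeeze_zero' (hreg.mono fun t ht => ht.2.1) (hreg.mono fun t ht => by linarith [ht.1]) hσ⟩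

theorem tendsto_xi_div (h : ReducedSystem ξ L1 L2) (hL1 : Tendsto L1 atTop (𝓝 0))
    (hL2 : Tendsto L2 atTop (𝓝 0)) : Tendsto (fun t => ξ t / t) atTop (𝓝 1) :=
  tendsto_div_id_of_tendsto_hasDerivAt (eventually_hasDerivAt_of_pos fun t ht => h.hasDerivAt_xi ht)
    (by simpa using (tendsto_const_nhds.sub (hL1.pow 2)).sub ((hL2.pow 2).const_mul 2))

theorem tendsto_xi_mul (h : ReducedSystem ξ L1 L2) {L : ℝ → ℝ}
    (hL : ∀ t, 0 < t → HasDerivAt L (1 - ξ t * L t) t) (hξ : Tendsto ξ atTop atTop)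
    (hL0 : Tendsto L atTop (𝓝 0)) (hL1 : Tendsto L1 atTop (𝓝 0)) (hL2 : Tendsto L2 atTop (𝓝 0)) :
    Tendsto (fun t => ξ t * L t) atTop (𝓝 1) := by
  have hforcing : Tendsto (fun t => L t * (1 - (L1 t ^ 2 + 2 * L2 t ^ 2))) atTop (𝓝 0) := by
    simpa using hL0.mul (tendsto_const_nhds.sub ((hL1.pow 2).add ((hL2.pow 2).const_mul 2)))
  have := tendsto_zero_of_hasDerivAt_neg_mul_add
    (eventually_hasDerivAt_of_pos fun t ht => h.hasDerivAt_xi_mul_sub_one ht (hL t ht)) hξ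
    (hforcing.div_atTop hξ)
  simpa using this.add_const 1

theorem neg_mul_exp_lt_xi_mul_L1_sub_one (h : ReducedSystem ξ L1 L2) {a : ℝ}
    (ha : ∀ t ≥ a, 0 < t ∧ 0 ≤ L1 t ∧ L1 t ^ 2 + 2 * L2 t ^ 2 ≤ 1 ∧ 1 < ξ t) :
    ∀ t ≥ a, -(|ξ a * L1 a - 1| + 1) * Real.exp (a - t) < ξ t * L1 t - 1 :=
  neg_mul_exp_lt_of_neg_mul_le_hasDerivAt (by positivity)
    (by linarith [neg_abs_le (ξ a * L1 a - 1)])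
    (fun t ht => h.hasDerivAt_xi_mul_sub_one (ha t ht).1 (h.hasDerivAt_L1 (ha t ht).1))
    (fun t ht => (ha t ht).2.2.2) fun t ht => by
      obtain ⟨-, hL1, hS, -⟩ := ha t ht
      nlinarith [mul_nonneg hL1 (sub_nonneg.2 hS)]

theorem isBoundedUnder_mul_of_hasDerivAt (h : ReducedSystem ξ L1 L2)
    (hreg : ∀ᶠ t in atTop, 0 ≤ L1 t ∧ 0 ≤ L2 t ∧ L1 t + 2 * L2 t < 1 / 2)
    (hξ : Tendsto (fun t => ξ t / t) atTop (𝓝 1)) {R : ℝ → ℝ} (hR : ∀ t, 0 < t → 0 < R t)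
    (hR' : ∀ t, 0 < t → HasDerivAt R (-R t * L1 t) t) :
    IsBoundedUnder (· ≤ ·) atTop (fun t => t * R t) := by
  obtain ⟨a, ha⟩ : ∃ a, ∀ t ≥ a,
      0 < t ∧ 0 ≤ L1 t ∧ L1 t ^ 2 + 2 * L2 t ^ 2 ≤ 1 ∧ 1 < ξ t ∧ t ≤ 2 * ξ t := by
    refine eventually_atTop.1 ?_
    filter_upwards [hreg, hξ.eventually (lt_mem_nhds one_half_lt_one), eventually_gt_atTop 2]
      with t ⟨hL1, hL2, hσ⟩ hξt ht
    rw [lt_div_iff₀ (by linarith)] at hξt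
    exact ⟨by linarith, hL1, by linarith [sq_add_two_mul_sq_le_of_le hL1 hL2 hσ.le],
      by linarith, by linarith⟩
  set B := |ξ a * L1 a - 1| + 1
  have hm := h.neg_mul_exp_lt_xi_mul_L1_sub_one fun t ht => ⟨(ha t ht).1, (ha t ht).2.1,
    (ha t ht).2.2.1, (ha t ht).2.2.2.1⟩
  have hR_anti : ∀ t ≥ a, R t ≤ R a := fun t ht => by
    have := image_sub_le_mul_sub_of_hasDerivAt_le (C := 0) ht
      (fun u hu => hR' u (ha u hu.1).1) fun u hu => by
        nlinarith [hR u (ha u hu.1).1, (ha u hu.1).2.1]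
    linarith
  -- `(R ξ)' = -R (ξ L1 - 1) - R (L1² + 2 L2²) ≤ R a * B * exp (a - t)`.
  have hΦ : ∀ t ≥ a, R t * ξ t + R a * B * Real.exp (a - t) - (R a * ξ a + R a * B) ≤ 0 :=
    fun t ht => by
      have := image_sub_le_mul_sub_of_hasDerivAt_le (C := 0) ht
        (fun u hu => ((hR' u (ha u hu.1).1).mul (h.hasDerivAt_xi (ha u hu.1).1)).add
          ((((hasDerivAt_id' u).const_sub a).exp).const_mul (R a * B)))
        fun u hu => by
          have hRu := hR u (ha u hu.1).1
          have := hm u hu.1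
          have := hR_anti u hu.1
          have : R u * (B * Real.exp (a - u)) ≤ R a * (B * Real.exp (a - u)) := by gcongr
          nlinarith [sq_nonneg (L1 u), sq_nonneg (L2 u)]
      simpa using this
  refine isBoundedUnder_of_eventually_le (a := 2 * (R a * ξ a + R a * B)) ?_
  filter_upwards [eventually_ge_atTop a] with t ht
  have hRt := hR t (ha t ht).1
  have := hΦ t ht
  have : 0 < R a * B * Real.exp (a - t) := by
    have := hR a (ha a le_rfl).1
    positivity
  nlinarith [(ha t ht).2.2.2.2]

end ReducedSystem

/-- Asymptotically conical behavior of the reduced U(2)-invariant expander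
solutions for `α > 0`. -/
theorem reduced_system_asymptotics (α : ℝ) (hα : 0 < α) (ξ L1 L2 : ℝ → ℝ)
    (hsys : ReducedSystem ξ L1 L2) (hbc : ReducedBC α ξ L1 L2) :
    Tendsto (fun t => ξ t / t) atTop (nhds 1) ∧
    Tendsto (fun t => t * L1 t) atTop (nhds 1) ∧
    Tendsto (fun t => t * L2 t) atTop (nhds 1) ∧
    ∀ R : ℝ → ℝ, (∀ t ∈ Ioi (0 : ℝ), 0 < R t) →
      (∀ t ∈ Ioi (0 : ℝ), HasDerivAt R (-(R t) * L1 t) t) →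
      IsBoundedUnder (· ≤ ·) atTop (fun t => t * R t) := by
  obtain ⟨a, ⟨hL1a, hL2a, hgap, hE⟩, ha : 0 < a⟩ :=
    ((hbc.eventually_pos_gap_pos_energy_gt hα).and self_mem_nhdsWithin).exists
  have hreg := hsys.eventually_trapped ha hL1a hL2a hgap hE
  have hξ := hsys.tendsto_xi_atTop hreg
  obtain ⟨hL1, hL2⟩ := hsys.tendsto_L1_L2_zero hreg hξ
  have hξ_div := hsys.tendsto_xi_div hL1 hL2
  refine ⟨hξ_div, tendsto_id_mul_of_tendsto_div_id hξ_div ?_,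
    tendsto_id_mul_of_tendsto_div_id hξ_div ?_,
    fun R hR hR' => hsys.isBoundedUnder_mul_of_hasDerivAt hreg hξ_div hR hR'⟩
  · exact hsys.tendsto_xi_mul (fun t ht => hsys.hasDerivAt_L1 ht) hξ hL1 hL1 hL2
  · exact hsys.tendsto_xi_mul (fun t ht => hsys.hasDerivAt_L2 ht) hξ hL2 hL1 hL2
end

section
/- Let λ ∈ ℝ, let I ⊆ ℝ be an interval, and let ξ, Lk, Ri, Rk : I → ℝ be differentiable functions satisfying ξ' = −Lk² − 2Rk² − λ, Lk' = −ξ·Lk + 2Rk² − λ, Ri' = −Ri·Lk, and Rk' = Rk·Lk − 2Rk² on I. Then the function Z := λ + Rk·(ξ + Lk − 4Ri) is differentiable on I with Z' = −2·Rk·Z; consequently, if Z(t0) = 0 for some t0 ∈ I, then Z vanishes identically on I. -/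
/-! Substituting the ODE system into the derivative of `Z` leaves the linear equation
`Z' = -2 Rk Z`. For a linear equation with continuous coefficient, Grönwall's inequality on
compact subintervals (run backwards in time through the reflection `t ↦ -t`) shows that a
solution vanishing at one point vanishes on the whole interval. -/

open Set

section LinearODE

variable {E : Type*} [NormedAddCommGroup E] [NormedSpace ℝ E] {Z : ℝ → E} {c : ℝ → ℝ}

theorem eq_zero_on_Icc_of_hasDerivWithinAt_smul_self_of_eq_zero_left {a b : ℝ}
    (hc : ContinuousOn c (Icc a b))
    (hZ : ∀ x ∈ Icc a b, HasDerivWithinAt Z (c x • Z x) (Icc a b) x) (ha : Z a = 0) :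
    ∀ x ∈ Icc a b, Z x = 0 := by
  obtain ⟨K, hK⟩ := isCompact_Icc.exists_bound_of_continuousOn hc
  refine eq_zero_of_abs_deriv_le_mul_abs_self_of_eq_zero_right (K := K)
    (fun x hx => (hZ x hx).continuousWithinAt)
    (fun x hx => (hZ x (Ico_subset_Icc_self hx)).mono_of_mem_nhdsWithin
      (Icc_mem_nhdsGE_of_mem hx)) ha fun x hx => ?_
  rw [norm_smul]
  exact mul_le_mul_of_nonneg_right (hK x (Ico_subset_Icc_self hx)) (norm_nonneg _)

theorem eq_zero_on_Icc_of_hasDerivWithinAt_smul_self_of_eq_zero_right {a b : ℝ}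
    (hc : ContinuousOn c (Icc a b))
    (hZ : ∀ x ∈ Icc a b, HasDerivWithinAt Z (c x • Z x) (Icc a b) x) (hb : Z b = 0) :
    ∀ x ∈ Icc a b, Z x = 0 := by
  have hneg : MapsTo (fun x : ℝ => -x) (Icc (-b) (-a)) (Icc a b) := fun _ hx =>
    ⟨le_neg.mpr hx.2, neg_le.mpr hx.1⟩
  have hZneg : ∀ x ∈ Icc (-b) (-a), HasDerivWithinAt (fun x => Z (-x))
      ((-c (-x)) • Z (-x)) (Icc (-b) (-a)) x := fun x hx => by
    simpa [Function.comp_def] using (hZ (-x) (hneg hx)).scomp x (hasDerivWithinAt_neg x _) hneg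
  intro x hx
  simpa using eq_zero_on_Icc_of_hasDerivWithinAt_smul_self_of_eq_zero_left
    (hc.comp continuousOn_neg hneg).neg hZneg (by simpa using hb) (-x)
    ⟨neg_le_neg hx.2, neg_le_neg hx.1⟩

theorem Set.OrdConnected.eq_zero_of_hasDerivWithinAt_smul_self {I : Set ℝ} (hI : I.OrdConnected)
    (hc : ContinuousOn c I) (hZ : ∀ x ∈ I, HasDerivWithinAt Z (c x • Z x) I x)
    {t₀ : ℝ} (ht₀ : t₀ ∈ I) (hZt₀ : Z t₀ = 0) : ∀ t ∈ I, Z t = 0 := by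
  have hZIcc {a b : ℝ} (ha : a ∈ I) (hb : b ∈ I) :
      ∀ x ∈ Icc a b, HasDerivWithinAt Z (c x • Z x) (Icc a b) x := fun x hx =>
    (hZ x (hI.out ha hb hx)).mono (hI.out ha hb)
  intro t ht
  rcases le_total t₀ t with hle | hle
  · exact eq_zero_on_Icc_of_hasDerivWithinAt_smul_self_of_eq_zero_left
      (hc.mono (hI.out ht₀ ht)) (hZIcc ht₀ ht) hZt₀ t ⟨hle, le_rfl⟩
  · exact eq_zero_on_Icc_of_hasDerivWithinAt_smul_self_of_eq_zero_right
      (hc.mono (hI.out ht ht₀)) (hZIcc ht ht₀) hZt₀ t ⟨le_rfl, hle⟩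

end LinearODE

/-- Along solutions of the U(2)-invariant Kähler subsystem, the quantity
`Z = λ + Rk·(ξ + Lk − 4Ri)` satisfies `Z' = −2·Rk·Z`; consequently if `Z`
vanishes at one point of the interval `I`, it vanishes identically on `I`. -/
theorem kahler_conserved_quantity (lam : ℝ) (I : Set ℝ) (hI : I.OrdConnected)
    (ξ Lk Ri Rk : ℝ → ℝ)
    (hξ : ∀ t ∈ I, HasDerivWithinAt ξ (-(Lk t) ^ 2 - 2 * (Rk t) ^ 2 - lam) I t)
    (hLk : ∀ t ∈ I, HasDerivWithinAt Lk (-(ξ t) * Lk t + 2 * (Rk t) ^ 2 - lam) I t)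
    (hRi : ∀ t ∈ I, HasDerivWithinAt Ri (-(Ri t) * Lk t) I t)
    (hRk : ∀ t ∈ I, HasDerivWithinAt Rk (Rk t * Lk t - 2 * (Rk t) ^ 2) I t) :
    (∀ t ∈ I,
      HasDerivWithinAt (fun s => lam + Rk s * (ξ s + Lk s - 4 * Ri s))
        (-2 * Rk t * (lam + Rk t * (ξ t + Lk t - 4 * Ri t))) I t) ∧
    (∀ t₀ ∈ I, lam + Rk t₀ * (ξ t₀ + Lk t₀ - 4 * Ri t₀) = 0 →
      ∀ t ∈ I, lam + Rk t * (ξ t + Lk t - 4 * Ri t) = 0) := by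
  set Z : ℝ → ℝ := fun s => lam + Rk s * (ξ s + Lk s - 4 * Ri s)
  have hZ : ∀ t ∈ I, HasDerivWithinAt Z (-2 * Rk t * Z t) I t := fun t ht => by
    refine ((hRk t ht).mul (((hξ t ht).add (hLk t ht)).sub ((hRi t ht).const_mul 4))
      |>.const_add lam).congr_deriv ?_
    simp only [Z, Pi.add_apply, Pi.sub_apply]
    ring
  refine ⟨hZ, fun t₀ ht₀ hZt₀ =>
    hI.eq_zero_of_hasDerivWithinAt_smul_self (c := fun t => -2 * Rk t)
      (continuousOn_const.mul fun t ht => (hRk t ht).continuousWithinAt) hZ ht₀ hZt₀⟩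
end

section
/- Let C ∈ ℝ, let I ⊆ ℝ be an interval, and let f : I → ℝ be a twice differentiable function with f(t) > 0 for all t ∈ I, satisfying −2·f''/f + C·(f')² − 4·(f')²/f² + 4/f² = 1 on I. Then the function t ↦ f(t)⁴·f'(t)²·e^{−C·f(t)²/2} is differentiable on I with derivative t ↦ f'(t)·f(t)³·e^{−C·f(t)²/2}·(4 − f(t)²). -/
/-!
Differentiating `f⁴ (f')² e^{-Cf²/2}` gives `f' f³ e^{-Cf²/2} (4 (f')² + 2 f f'' - C f² (f')²)`,
and multiplying the soliton ODE by `f²` turns the bracket into `4 - f²`.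
-/

theorem soliton_ode_bracket_eq {C a b c : ℝ} (ha : a ≠ 0)
    (h : -2 * c / a + C * b ^ 2 - 4 * b ^ 2 / a ^ 2 + 4 / a ^ 2 = 1) :
    4 * b ^ 2 + 2 * a * c - C * a ^ 2 * b ^ 2 = 4 - a ^ 2 := by
  field_simp at h
  linear_combination -h

theorem hasDerivWithinAt_pow_four_mul_sq_mul_exp {C : ℝ} {f f' : ℝ → ℝ} {s : Set ℝ}
    {t c : ℝ} (hf : HasDerivWithinAt f (f' t) s t) (hf' : HasDerivWithinAt f' c s t) :
    HasDerivWithinAt (fun x => f x ^ 4 * f' x ^ 2 * Real.exp (-C * f x ^ 2 / 2))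
      (f' t * f t ^ 3 * Real.exp (-C * f t ^ 2 / 2) *
        (4 * f' t ^ 2 + 2 * f t * c - C * f t ^ 2 * f' t ^ 2)) s t := by
  have hexp : HasDerivWithinAt (fun x => Real.exp (-C * f x ^ 2 / 2))
      (Real.exp (-C * f t ^ 2 / 2) * (-C * (2 * f t * f' t) / 2)) s t := by
    have hquad := ((hf.fun_pow 2).const_mul (-C)).div_const 2
    simp only [Nat.cast_ofNat] at hquad
    exact (hquad.congr_deriv (by ring)).exp
  refine (((hf.fun_pow 4).mul (hf'.fun_pow 2)).mul hexp).congr_deriv ?_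
  simp only [Pi.mul_apply, Nat.cast_ofNat]
  ring

theorem kahler_first_integral_deriv_general (C : ℝ) (I : Set ℝ)
    (f f' f'' : ℝ → ℝ) (hf : ∀ t ∈ I, 0 < f t)
    (hf' : ∀ t ∈ I, HasDerivWithinAt f (f' t) I t)
    (hf'' : ∀ t ∈ I, HasDerivWithinAt f' (f'' t) I t)
    (hODE : ∀ t ∈ I,
      -2 * f'' t / f t + C * (f' t) ^ 2 - 4 * (f' t) ^ 2 / (f t) ^ 2 + 4 / (f t) ^ 2 = 1) :
    ∀ t ∈ I,
      HasDerivWithinAt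
        (fun s => (f s) ^ 4 * (f' s) ^ 2 * Real.exp (-C * (f s) ^ 2 / 2))
        (f' t * (f t) ^ 3 * Real.exp (-C * (f t) ^ 2 / 2) * (4 - (f t) ^ 2)) I t := by
  intro t ht
  rw [← soliton_ode_bracket_eq (hf t ht).ne' (hODE t ht)]
  exact hasDerivWithinAt_pow_four_mul_sq_mul_exp (hf' t ht) (hf'' t ht)

/-- For a positive solution `f` of the U(2)-invariant Kähler soliton ODE
`−2f''/f + C(f')² − 4(f')²/f² + 4/f² = 1`, the quantity
`f⁴·(f')²·e^{−Cf²/2}` has derivative `f'·f³·e^{−Cf²/2}·(4 − f²)`. -/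
theorem kahler_first_integral_deriv (C : ℝ) (I : Set ℝ) (hI : I.OrdConnected)
    (f f' f'' : ℝ → ℝ) (hf : ∀ t ∈ I, 0 < f t)
    (hf' : ∀ t ∈ I, HasDerivWithinAt f (f' t) I t)
    (hf'' : ∀ t ∈ I, HasDerivWithinAt f' (f'' t) I t)
    (hODE : ∀ t ∈ I,
      -2 * f'' t / f t + C * (f' t) ^ 2 - 4 * (f' t) ^ 2 / (f t) ^ 2 + 4 / (f t) ^ 2 = 1) :
    ∀ t ∈ I,
      HasDerivWithinAt
        (fun s => (f s) ^ 4 * (f' s) ^ 2 * Real.exp (-C * (f s) ^ 2 / 2))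
        (f' t * (f t) ^ 3 * Real.exp (-C * (f t) ^ 2 / 2) * (4 - (f t) ^ 2)) I t :=
  kahler_first_integral_deriv_general C I f f' f'' hf hf' hf'' hODE
end

section
/- Let C, L ∈ ℝ with C ≠ 0 and 0 < L < 4, and define H̄1 : ℝ → ℝ by H̄1(F) = e^{−C(F−L)/2}·(C²F(F−4) + 4C(F−2) + 8) − (C²L(L−4) + 4C(L−2) + 8). Then H̄1(L) = 0; H̄1'(F) = −(C³/2)·e^{−C(F−L)/2}·F·(F−4) for all F ∈ ℝ; H̄1(F) ≠ 0 for all F ∈ (L, 4]; and H̄1 has at most one zero in (4, ∞). -/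
/-!
`H̄1' = -(C³/2) e^{-C(F-L)/2} F (F - 4)`, so `C · H̄1` has derivative
`(C⁴/2) e^{-C(F-L)/2} F (4 - F)`, whatever the sign of `C`: it increases strictly on `[0, 4]`
and decreases strictly on `[4, ∞)`. Since `H̄1(L) = 0`, the first gives `H̄1 ≠ 0` on `(L, 4]`
when `L ≥ 0`; the second makes `H̄1` injective on `[4, ∞)`.
-/

open Set Real

noncomputable section

namespace Hbar1

def quadratic (C F : ℝ) : ℝ := C ^ 2 * F * (F - 4) + 4 * C * (F - 2) + 8

/-- The paper's `H̄1`, as a function of `F = f²`. -/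
def hbar1 (C L F : ℝ) : ℝ := exp (-C * (F - L) / 2) * quadratic C F - quadratic C L

variable (C L : ℝ)

theorem hbar1_self : hbar1 C L L = 0 := by
  simp [hbar1]

theorem hasDerivAt_hbar1 (F : ℝ) :
    HasDerivAt (hbar1 C L) (-(C ^ 3 / 2) * exp (-C * (F - L) / 2) * F * (F - 4)) F := by
  have hexp :
      HasDerivAt (fun F => exp (-C * (F - L) / 2)) (exp (-C * (F - L) / 2) * (-C / 2)) F := by
    simpa using ((((hasDerivAt_id F).sub_const L).const_mul (-C)).div_const 2).exp
  have hquad : HasDerivAt (quadratic C) (C ^ 2 * (2 * F - 4) + 4 * C) F := by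
    have := ((((hasDerivAt_id F).const_mul (C ^ 2)).mul ((hasDerivAt_id F).sub_const 4)).add
      (((hasDerivAt_id F).sub_const 2).const_mul (4 * C))).add_const 8
    refine this.congr_deriv ?_
    simp only [id_eq]
    ring
  refine ((hexp.mul hquad).sub_const (quadratic C L)).congr_deriv ?_
  unfold quadratic
  ring

theorem hasDerivAt_const_mul_hbar1 (F : ℝ) :
    HasDerivAt (fun F => C * hbar1 C L F)
      (C ^ 4 / 2 * exp (-C * (F - L) / 2) * (F * (4 - F))) F := by
  refine ((hasDerivAt_hbar1 C L F).const_mul C).congr_deriv ?_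
  ring

variable {C}

theorem strictMonoOn_const_mul_hbar1 (hC : C ≠ 0) :
    StrictMonoOn (fun F => C * hbar1 C L F) (Icc 0 4) := by
  refine strictMonoOn_of_hasDerivWithinAt_pos (convex_Icc 0 4)
    (fun F _ => (hasDerivAt_const_mul_hbar1 C L F).continuousAt.continuousWithinAt)
    (fun F _ => (hasDerivAt_const_mul_hbar1 C L F).hasDerivWithinAt) ?_
  rw [interior_Icc]
  rintro F ⟨hF0, hF4⟩
  exact mul_pos (by positivity) (mul_pos hF0 (by linarith))

theorem strictAntiOn_const_mul_hbar1 (hC : C ≠ 0) :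
    StrictAntiOn (fun F => C * hbar1 C L F) (Ici 4) := by
  refine strictAntiOn_of_hasDerivWithinAt_neg (convex_Ici 4)
    (fun F _ => (hasDerivAt_const_mul_hbar1 C L F).continuousAt.continuousWithinAt)
    (fun F _ => (hasDerivAt_const_mul_hbar1 C L F).hasDerivWithinAt) ?_
  rw [interior_Ici]
  intro F (hF4 : 4 < F)
  exact mul_neg_of_pos_of_neg (by positivity) (mul_neg_of_pos_of_neg (by linarith) (by linarith))

variable {L}

theorem hbar1_ne_zero_of_mem_Ioc (hC : C ≠ 0) (hL : 0 ≤ L) {F : ℝ} (hF : F ∈ Ioc L 4) :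
    hbar1 C L F ≠ 0 := by
  have hlt := strictMonoOn_const_mul_hbar1 L hC
    ⟨hL, hF.1.le.trans hF.2⟩ ⟨hL.trans hF.1.le, hF.2⟩ hF.1
  simp only [hbar1_self, mul_zero] at hlt
  exact right_ne_zero_of_mul hlt.ne'

theorem injOn_hbar1_Ici (hC : C ≠ 0) : InjOn (hbar1 C L) (Ici 4) := fun _ h₁ _ h₂ h =>
  (strictAntiOn_const_mul_hbar1 L hC).injOn h₁ h₂ (congrArg (C * ·) h)

end Hbar1

end

open Hbar1 in
theorem Hbar1_properties_general (C L : ℝ) (hC : C ≠ 0) (hL : 0 < L) :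
    (Real.exp (-C * (L - L) / 2) * (C ^ 2 * L * (L - 4) + 4 * C * (L - 2) + 8)
        - (C ^ 2 * L * (L - 4) + 4 * C * (L - 2) + 8) = 0) ∧
    (∀ F : ℝ,
      HasDerivAt
        (fun F => Real.exp (-C * (F - L) / 2) * (C ^ 2 * F * (F - 4) + 4 * C * (F - 2) + 8)
          - (C ^ 2 * L * (L - 4) + 4 * C * (L - 2) + 8))
        (-(C ^ 3 / 2) * Real.exp (-C * (F - L) / 2) * F * (F - 4)) F) ∧
    (∀ F ∈ Ioc L 4,
      Real.exp (-C * (F - L) / 2) * (C ^ 2 * F * (F - 4) + 4 * C * (F - 2) + 8)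
        - (C ^ 2 * L * (L - 4) + 4 * C * (L - 2) + 8) ≠ 0) ∧
    (∀ F₁ ∈ Ioi (4 : ℝ), ∀ F₂ ∈ Ioi (4 : ℝ),
      Real.exp (-C * (F₁ - L) / 2) * (C ^ 2 * F₁ * (F₁ - 4) + 4 * C * (F₁ - 2) + 8)
          - (C ^ 2 * L * (L - 4) + 4 * C * (L - 2) + 8) = 0 →
      Real.exp (-C * (F₂ - L) / 2) * (C ^ 2 * F₂ * (F₂ - 4) + 4 * C * (F₂ - 2) + 8)
          - (C ^ 2 * L * (L - 4) + 4 * C * (L - 2) + 8) = 0 →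
      F₁ = F₂) :=
  ⟨hbar1_self C L, hasDerivAt_hbar1 C L, fun _ hF => hbar1_ne_zero_of_mem_Ioc hC hL.le hF,
    fun _ h₁ _ h₂ e₁ e₂ =>
      injOn_hbar1_Ici hC (Ioi_subset_Ici_self h₁) (Ioi_subset_Ici_self h₂) (e₁.trans e₂.symm)⟩

/-- Properties of the function `H̄1` arising from the first integral of the
U(2)-invariant gradient Kähler Ricci soliton ODE with `λ = 1`. -/
theorem Hbar1_properties (C L : ℝ) (hC : C ≠ 0) (hL : 0 < L) (hL4 : L < 4) :
    (Real.exp (-C * (L - L) / 2) * (C ^ 2 * L * (L - 4) + 4 * C * (L - 2) + 8)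
        - (C ^ 2 * L * (L - 4) + 4 * C * (L - 2) + 8) = 0) ∧
    (∀ F : ℝ,
      HasDerivAt
        (fun F => Real.exp (-C * (F - L) / 2) * (C ^ 2 * F * (F - 4) + 4 * C * (F - 2) + 8)
          - (C ^ 2 * L * (L - 4) + 4 * C * (L - 2) + 8))
        (-(C ^ 3 / 2) * Real.exp (-C * (F - L) / 2) * F * (F - 4)) F) ∧
    (∀ F ∈ Ioc L 4,
      Real.exp (-C * (F - L) / 2) * (C ^ 2 * F * (F - 4) + 4 * C * (F - 2) + 8)
        - (C ^ 2 * L * (L - 4) + 4 * C * (L - 2) + 8) ≠ 0) ∧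
    (∀ F₁ ∈ Ioi (4 : ℝ), ∀ F₂ ∈ Ioi (4 : ℝ),
      Real.exp (-C * (F₁ - L) / 2) * (C ^ 2 * F₁ * (F₁ - 4) + 4 * C * (F₁ - 2) + 8)
          - (C ^ 2 * L * (L - 4) + 4 * C * (L - 2) + 8) = 0 →
      Real.exp (-C * (F₂ - L) / 2) * (C ^ 2 * F₂ * (F₂ - 4) + 4 * C * (F₂ - 2) + 8)
          - (C ^ 2 * L * (L - 4) + 4 * C * (L - 2) + 8) = 0 →
      F₁ = F₂) :=
  Hbar1_properties_general C L hC hL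
end
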